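/- arXiv:2604.06590 — 2 statements merged into one kernel-verified Lean document; each statement's English description precedes it below -/
import Mathlib

section
/- For every odd integer n ≥ 5, let ε_n := 4/((n-3)^2 + 6). Then for all p with ε_n < p < 1/2, we have Φ_p(g_n) > Φ_p(Maj_n). -/
open Finset

noncomputable def chi (b : Bool) : ℝ := if b then 1 else -1

noncomputable def maj (n : ℕ) (x : Fin n → Bool) : ℝ :=
  Real.sign (∑ i, chi (x i))

def eVec (n : ℕ) : Fin n → Bool := fun i => decide ((i : ℕ) < (n - 1) / 2 + 1)

noncomputable def gfun (n : ℕ) (x : Fin n → Bool) : ℝ :=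
  if x = eVec n ∨ x = (fun i => !(eVec n i)) then - maj n x else maj n x

noncomputable def stab (n : ℕ) (ρ : ℝ) (f : (Fin n → Bool) → ℝ) : ℝ :=
  (1 / 2 ^ n) * ∑ x : Fin n → Bool, ∑ z : Fin n → Bool,
    (∏ i, if z i then (1 - ρ) / 2 else (1 + ρ) / 2) * (f x * f (fun i => xor (x i) (z i)))

noncomputable def phi (n : ℕ) (p : ℝ) (f : (Fin n → Bool) → ℝ) : ℝ :=
  ∑ s : Fin n → Bool, (∏ i, if s i then p else 1 - p) *
    ((1 / 2 ^ n) * ∑ x : Fin n → Bool,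
      |(1 / 2 ^ n) * ∑ z : Fin n → Bool, f (fun i => if s i then x i else z i)|)

noncomputable def binomPMF (m : ℕ) (q : ℝ) (k : ℕ) : ℝ :=
  (m.choose k : ℝ) * q ^ k * (1 - q) ^ (m - k)

noncomputable def binomCollision (m : ℕ) (q : ℝ) : ℝ :=
  ∑ k ∈ Finset.range (m + 1), (binomPMF m q k) ^ 2

/-! ### auxiliary definitions -/

def ichi (b : Bool) : ℤ := if b then 1 else -1

lemma chi_eq_cast (b : Bool) : chi b = ((ichi b : ℤ) : ℝ) := by
  cases b <;> simp [chi, ichi]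

def scube {α : Type*} [Fintype α] (v : α → Bool) : ℤ := ∑ i, ichi (v i)

def ksum (α : Type*) [Fintype α] [DecidableEq α] (d : ℤ) : ℤ := ∑ v : α → Bool, (d + scube v).sign

def glue {n : ℕ} (s : Fin n → Bool) (u : {i : Fin n // s i = true} → Bool)
    (v : {i : Fin n // ¬ s i = true} → Bool) : Fin n → Bool :=
  fun i => if h : s i = true then u ⟨i, h⟩ else v ⟨i, h⟩

noncomputable def dInt {n : ℕ} (s : Fin n → Bool) : ℤ :=
  ∑ i, if s i then ichi (eVec n i) else 0

noncomputable def tau {n : ℕ} (s : Fin n → Bool) : ℝ :=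
  if s = (fun _ => false) then 0
  else if s = (fun _ => true) then 0
  else if dInt s ≤ 0 then 1 else -1

def ct {α : Type*} [Fintype α] (σ : α → Bool) : ℕ := #(univ.filter (fun i => σ i = true))

/-! ### sign basics -/

lemma real_sign_intCast (k : ℤ) : Real.sign ((k : ℤ) : ℝ) = ((k.sign : ℤ) : ℝ) := by
  rcases lt_trichotomy k 0 with h | h | h
  · rw [Real.sign_of_neg (by exact_mod_cast h), Int.sign_eq_neg_one_of_neg h]; norm_num
  · simp [h]
  · rw [Real.sign_of_pos (by exact_mod_cast h), Int.sign_eq_one_of_pos h]; norm_num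

lemma scube_neg {α : Type*} [Fintype α] (v : α → Bool) :
    scube (fun i => !(v i)) = - scube v := by
  unfold scube
  rw [← Finset.sum_neg_distrib]
  refine Finset.sum_congr rfl fun i _ => ?_
  cases h : v i <;> simp [ichi, h]

lemma scube_eq {α : Type*} [Fintype α] [DecidableEq α] (v : α → Bool) :
    scube v = 2 * (ct v : ℤ) - (Fintype.card α : ℤ) := by
  unfold scube ct
  have h1 : ∀ i ∈ (univ : Finset α), ichi (v i) = 2 * (if v i = true then (1:ℤ) else 0) - 1 := by
    intro i _; cases h : v i <;> simp [ichi, h]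
  rw [Finset.sum_congr rfl h1, Finset.sum_sub_distrib, ← Finset.mul_sum,
    Finset.sum_boole, Finset.sum_const, Fintype.card]
  simp

lemma scube_add_card_even {α : Type*} [Fintype α] (v : α → Bool) :
    Even (scube v + (Fintype.card α : ℤ)) := by
  classical
  rw [scube_eq]
  have : 2 * (ct v : ℤ) - (Fintype.card α : ℤ) + (Fintype.card α : ℤ) = 2 * (ct v : ℤ) := by ring
  rw [this]
  exact even_two_mul _

/-! ### ksum lemmas -/

lemma two_ksum (α : Type*) [Fintype α] [DecidableEq α] (d : ℤ) :
    2 * ksum α d = ∑ v : α → Bool, ((d + scube v).sign + (d - scube v).sign) := by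
  classical
  have inv : Function.Involutive (fun v : α → Bool => (fun i => !(v i))) := by
    intro v; funext i; simp
  have h2 : ksum α d = ∑ v : α → Bool, (d - scube v).sign := by
    unfold ksum
    rw [← Equiv.sum_comp inv.toPerm (fun v => (d + scube v).sign)]
    refine Finset.sum_congr rfl fun v _ => ?_
    have : scube (fun i => !(v i)) = - scube v := scube_neg v
    simp only [Function.Involutive.toPerm, Equiv.coe_fn_mk]
    rw [this]
    ring_nf
  rw [Finset.sum_add_distrib, ← h2]
  unfold ksum; ring

lemma sign_cases (k : ℤ) :
    k.sign = 1 ∧ 0 < k ∨ k.sign = 0 ∧ k = 0 ∨ k.sign = -1 ∧ k < 0 := by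
  rcases lt_trichotomy k 0 with h | h | h
  · exact Or.inr (Or.inr ⟨Int.sign_eq_neg_one_of_neg h, h⟩)
  · exact Or.inr (Or.inl ⟨by rw [h, Int.sign_zero], h⟩)
  · exact Or.inl ⟨Int.sign_eq_one_of_pos h, h⟩

lemma sign_pair_nonpos {d S : ℤ} (hd : d ≤ 0) : (d + S).sign + (d - S).sign ≤ 0 := by
  rcases sign_cases (d + S) with ⟨h1, h2⟩ | ⟨h1, h2⟩ | ⟨h1, h2⟩ <;>
    rcases sign_cases (d - S) with ⟨h3, h4⟩ | ⟨h3, h4⟩ | ⟨h3, h4⟩ <;> omega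

lemma sign_pair_nonneg {d S : ℤ} (hd : 1 ≤ d) : 0 ≤ (d + S).sign + (d - S).sign := by
  rcases sign_cases (d + S) with ⟨h1, h2⟩ | ⟨h1, h2⟩ | ⟨h1, h2⟩ <;>
    rcases sign_cases (d - S) with ⟨h3, h4⟩ | ⟨h3, h4⟩ | ⟨h3, h4⟩ <;> omega

lemma ksum_nonpos (α : Type*) [Fintype α] [DecidableEq α] {d : ℤ} (hd : d ≤ 0) : ksum α d ≤ 0 := by
  have h := two_ksum α d
  have : ∑ v : α → Bool, ((d + scube v).sign + (d - scube v).sign) ≤ 0 :=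
    Finset.sum_nonpos fun v _ => sign_pair_nonpos hd
  omega

lemma exists_balanced (α : Type*) [Fintype α] [DecidableEq α] (hc : 1 ≤ Fintype.card α) :
    ∃ v₁ v₂ : α → Bool, v₁ ≠ v₂ ∧ (scube v₁ = 1 ∨ scube v₁ = 0) ∧ scube v₂ = - scube v₁ := by
  have hle : (Fintype.card α + 1) / 2 ≤ #(univ : Finset α) := by
    rw [Finset.card_univ]; omega
  obtain ⟨T, -, hT⟩ := Finset.exists_subset_card_eq hle
  refine ⟨fun i => decide (i ∈ T), fun i => !(decide (i ∈ T)), ?_, ?_, scube_neg _⟩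
  · intro h
    obtain ⟨i⟩ := (Fintype.card_pos_iff (α := α)).mp hc
    have := congrFun h i
    cases hd : decide (i ∈ T) <;> simp [hd] at this
  · have hct : ct (fun i => decide (i ∈ T)) = (Fintype.card α + 1) / 2 := by
      rw [← hT]; unfold ct; congr 1; ext i; simp
    rw [scube_eq, hct]
    rcases Nat.even_or_odd (Fintype.card α) with ⟨c, hc'⟩ | ⟨c, hc'⟩
    · right
      have h2 : (Fintype.card α + 1) / 2 = c := by omega
      rw [h2, hc']; push_cast; ring
    · left
      have h2 : (Fintype.card α + 1) / 2 = c + 1 := by omega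
      rw [h2, hc']; push_cast; ring

lemma ksum_ge_two (α : Type*) [Fintype α] [DecidableEq α] {d : ℤ} (hd : 1 ≤ d)
    (hc : 1 ≤ Fintype.card α) (hpar : Odd (d + (Fintype.card α : ℤ))) : 2 ≤ ksum α d := by
  obtain ⟨v₁, v₂, hne, hv₁, hv₂⟩ := exists_balanced α hc
  have key : ∀ v ∈ ({v₁, v₂} : Finset (α → Bool)),
      (d + scube v).sign + (d - scube v).sign = 2 := by
    intro v hv
    have hs : scube v = 1 ∨ scube v = 0 ∨ scube v = -1 := by
      rcases Finset.mem_insert.mp hv with h | h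
      · subst h; tauto
      · rw [Finset.mem_singleton.mp h, hv₂]; rcases hv₁ with h | h <;> rw [h] <;> tauto
    -- if d = 1, parity forces scube v even; in general |scube v| ≤ 1 < d or d = 1, scube = 0
    have h1 : 0 < d + scube v := by
      rcases hs with h | h | h <;> rw [h] <;> try omega
      -- case scube v = -1, d = 1 impossible by parity
      rcases lt_or_ge 1 d with h' | h'
      · omega
      · exfalso
        have hd1 : d = 1 := by omega
        have hev := scube_add_card_even v
        rw [h] at hev
        rcases hpar with ⟨c, hc'⟩
        rcases hev with ⟨c', hc''⟩
        omega
    have h2 : 0 < d - scube v := by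
      rcases hs with h | h | h <;> rw [h] <;> try omega
      rcases lt_or_ge 1 d with h' | h'
      · omega
      · exfalso
        have hd1 : d = 1 := by omega
        have hev := scube_add_card_even v
        rw [h] at hev
        rcases hpar with ⟨c, hc'⟩
        rcases hev with ⟨c', hc''⟩
        omega
    rw [Int.sign_eq_one_of_pos h1, Int.sign_eq_one_of_pos h2]; norm_num
  have hsub : ({v₁, v₂} : Finset (α → Bool)) ⊆ univ := Finset.subset_univ _
  have hge : (4:ℤ) ≤ ∑ v : α → Bool, ((d + scube v).sign + (d - scube v).sign) := by
    have := Finset.sum_le_sum_of_subset_of_nonneg hsub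
      (fun v _ _ => sign_pair_nonneg hd (S := scube v))
    have hpairsum : ∑ v ∈ ({v₁, v₂} : Finset (α → Bool)),
        ((d + scube v).sign + (d - scube v).sign) = 4 := by
      rw [Finset.sum_pair hne, key v₁ (by simp), key v₂ (by simp)]; norm_num
    omega
  have := two_ksum α d
  omega

lemma ksum_empty (α : Type*) [Fintype α] [DecidableEq α] (hα : Fintype.card α = 0) (d : ℤ) :
    ksum α d = d.sign := by
  have he : IsEmpty α := Fintype.card_eq_zero_iff.mp hα
  have h0 : ∀ v : α → Bool, scube v = 0 := fun v => by
    unfold scube; rw [Finset.univ_eq_empty, Finset.sum_empty]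
  unfold ksum
  calc ∑ v : α → Bool, (d + scube v).sign = ∑ _v : α → Bool, d.sign :=
        Finset.sum_congr rfl fun v _ => by rw [h0, add_zero]
    _ = (Fintype.card (α → Bool)) • d.sign := by rw [Finset.sum_const, Finset.card_univ]
    _ = d.sign := by rw [Fintype.card_fun, hα, pow_zero, one_smul]

/-! ### glue machinery -/

section Glue

variable {n : ℕ} (s : Fin n → Bool)

noncomputable def duI (u : {i : Fin n // s i = true} → Bool) : ℤ := ∑ i, ichi (u i)

lemma sum_split (F : Fin n → ℤ) :
    ∑ i, F i = (∑ i : {i : Fin n // s i = true}, F i) +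
      ∑ i : {i : Fin n // ¬ s i = true}, F i := by
  classical
  rw [← Finset.sum_filter_add_sum_filter_not univ (fun i => s i = true) F]
  congr 1
  · exact Finset.sum_subtype _ (by simp) F
  · exact Finset.sum_subtype _ (by simp) F

lemma glue_scube (u : {i : Fin n // s i = true} → Bool)
    (v : {i : Fin n // ¬ s i = true} → Bool) :
    ∑ i, ichi (glue s u v i) = duI s u + scube v := by
  rw [sum_split s (fun i => ichi (glue s u v i))]
  congr 1
  · refine Finset.sum_congr rfl fun i _ => ?_
    have : glue s u v i.1 = u i := by
      unfold glue; rw [dif_pos i.2]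
    rw [this]
  · refine Finset.sum_congr rfl fun i _ => ?_
    have : glue s u v i.1 = v i := by
      unfold glue; rw [dif_neg i.2]
    rw [this]

lemma maj_int (x : Fin n → Bool) : maj n x = (((∑ i, ichi (x i)).sign : ℤ) : ℝ) := by
  unfold maj
  have : ∑ i, chi (x i) = (((∑ i, ichi (x i)) : ℤ) : ℝ) := by
    rw [Finset.sum_congr rfl fun i _ => chi_eq_cast (x i)]
    push_cast
    rfl
  rw [this, real_sign_intCast]

lemma maj_glue (u : {i : Fin n // s i = true} → Bool)
    (v : {i : Fin n // ¬ s i = true} → Bool) :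
    maj n (glue s u v) = (((duI s u + scube v).sign : ℤ) : ℝ) := by
  rw [maj_int, glue_scube]

lemma maj_not (x : Fin n → Bool) : maj n (fun i => !(x i)) = - maj n x := by
  rw [maj_int, maj_int]
  have : ∑ i, ichi (!(x i)) = - ∑ i, ichi (x i) := by
    rw [← Finset.sum_neg_distrib]
    exact Finset.sum_congr rfl fun i _ => by cases h : x i <;> simp [ichi, h]
  rw [this, Int.sign_neg]
  push_cast
  ring

lemma du_e : duI s (fun i => eVec n i.1) = dInt s := by
  unfold duI dInt
  rw [← Finset.sum_filter]
  exact (Finset.sum_subtype _ (by simp) fun i => ichi (eVec n i)).symm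

lemma dInt_add_card_even :
    Even (dInt s + (Fintype.card {i : Fin n // s i = true} : ℤ)) := by
  classical
  unfold dInt
  rw [Fintype.card_subtype]
  have h1 : ((#(univ.filter fun i => s i = true) : ℕ) : ℤ)
      = ∑ i : Fin n, if s i then (1:ℤ) else 0 := by
    rw [Finset.sum_boole]
  rw [h1, ← Finset.sum_add_distrib]
  refine Finset.even_sum _ fun i _ => ?_
  by_cases h : s i = true
  · rw [if_pos h, if_pos h]
    cases h2 : eVec n i
    · exact ⟨0, by norm_num [ichi]⟩
    · exact ⟨1, by norm_num [ichi]⟩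
  · rw [if_neg h, if_neg h]; exact ⟨0, by norm_num⟩

lemma glue_sel (x z : Fin n → Bool) :
    (fun i => if s i then x i else z i) =
      glue s (fun i => x i.1) (fun i => z i.1) := by
  funext i
  unfold glue
  by_cases h : s i = true
  · rw [dif_pos h, if_pos h]
  · rw [dif_neg h, if_neg h]

lemma inner_split (f : (Fin n → Bool) → ℝ) (u : {i : Fin n // s i = true} → Bool) :
    ∑ z : Fin n → Bool, f (glue s u (fun i => z i.1)) =
      2 ^ (Fintype.card {i : Fin n // s i = true}) *
        ∑ v : {i : Fin n // ¬ s i = true} → Bool, f (glue s u v) := by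
  classical
  have := Equiv.sum_comp (Equiv.piEquivPiSubtypeProd (fun i : Fin n => s i = true)
    (fun _ => Bool)) (fun w => f (glue s u w.2))
  rw [show (fun z : Fin n → Bool =>
      f (glue s u (fun i : {i : Fin n // ¬ s i = true} => z i.1))) = fun z =>
      f (glue s u ((Equiv.piEquivPiSubtypeProd (fun i : Fin n => s i = true)
        (fun _ => Bool)) z).2) from rfl]
  rw [this, Fintype.sum_prod_type]
  show ∑ _x : {i : Fin n // s i = true} → Bool,
      ∑ v : {i : Fin n // ¬ s i = true} → Bool, f (glue s u v) = _
  rw [Finset.sum_const, Finset.card_univ, Fintype.card_fun, Fintype.card_bool, nsmul_eq_mul]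
  push_cast
  ring

lemma outer_split (G : ({i : Fin n // s i = true} → Bool) → ℝ) :
    ∑ x : Fin n → Bool, G (fun i => x i.1) =
      2 ^ (Fintype.card {i : Fin n // ¬ s i = true}) *
        ∑ u : {i : Fin n // s i = true} → Bool, G u := by
  classical
  have := Equiv.sum_comp (Equiv.piEquivPiSubtypeProd (fun i : Fin n => s i = true)
    (fun _ => Bool)) (fun w => G w.1)
  rw [show (fun x : Fin n → Bool => G (fun i : {i : Fin n // s i = true} => x i.1)) = fun x =>
      G ((Equiv.piEquivPiSubtypeProd (fun i : Fin n => s i = true)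
        (fun _ => Bool)) x).1 from rfl]
  rw [this, Fintype.sum_prod_type]
  show ∑ u : {i : Fin n // s i = true} → Bool,
      ∑ _v : {i : Fin n // ¬ s i = true} → Bool, G u = _
  have : ∀ u : {i : Fin n // s i = true} → Bool,
      ∑ _v : {i : Fin n // ¬ s i = true} → Bool, G u =
      2 ^ (Fintype.card {i : Fin n // ¬ s i = true}) * G u := by
    intro u
    rw [Finset.sum_const, Finset.card_univ, Fintype.card_fun, Fintype.card_bool, nsmul_eq_mul]
    push_cast
    ring
  rw [Finset.sum_congr rfl fun u _ => this u, ← Finset.mul_sum]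

noncomputable def innerPhi (n : ℕ) (f : (Fin n → Bool) → ℝ) (s : Fin n → Bool) : ℝ :=
  (1 / 2 ^ n) * ∑ x : Fin n → Bool,
    |(1 / 2 ^ n) * ∑ z : Fin n → Bool, f (fun i => if s i then x i else z i)|

lemma phi_eq_innerPhi (n : ℕ) (p : ℝ) (f : (Fin n → Bool) → ℝ) :
    phi n p f = ∑ s : Fin n → Bool, (∏ i, if s i then p else 1 - p) * innerPhi n f s := rfl

lemma innerPhi_eq (n : ℕ) (s : Fin n → Bool) (f : (Fin n → Bool) → ℝ) :
    innerPhi n f s = ((2:ℝ) ^ (Fintype.card {i : Fin n // ¬ s i = true}) / 2 ^ n) *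
      ∑ u : {i : Fin n // s i = true} → Bool,
        |((2:ℝ) ^ (Fintype.card {i : Fin n // s i = true}) / 2 ^ n) *
          ∑ v : {i : Fin n // ¬ s i = true} → Bool, f (glue s u v)| := by
  classical
  set c : ℝ := ((2:ℝ) ^ (Fintype.card {i : Fin n // s i = true}) / 2 ^ n) with hc
  set F : ({i : Fin n // s i = true} → Bool) → ℝ :=
    fun u => |c * ∑ v : {i : Fin n // ¬ s i = true} → Bool, f (glue s u v)| with hF
  have step1 : ∀ x : Fin n → Bool,
      |(1 / 2 ^ n : ℝ) * ∑ z : Fin n → Bool, f (fun i => if s i then x i else z i)| =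
      F (fun i => x i.1) := by
    intro x
    have h1 : ∀ z : Fin n → Bool, (fun i => if s i then x i else z i) =
        glue s (fun i => x i.1) (fun i => z i.1) := fun z => glue_sel s x z
    rw [Finset.sum_congr rfl fun z _ => congrArg f (h1 z)]
    rw [inner_split s f (fun i => x i.1)]
    simp only [hF, hc]
    congr 1
    ring
  unfold innerPhi
  rw [Finset.sum_congr rfl fun x _ => step1 x, outer_split s F]
  ring

end Glue

/-! ### the special vector e -/

lemma card_fin_lt (n c : ℕ) (h : c ≤ n) :
    #(univ.filter fun i : Fin n => (i : ℕ) < c) = c := by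
  classical
  rw [Finset.card_filter]
  rw [Fin.sum_univ_eq_sum_range (fun j => if j < c then 1 else 0) n]
  rw [← Finset.card_filter]
  rw [show (range n).filter (fun j => j < c) = range c by
    ext j; simp only [Finset.mem_filter, Finset.mem_range]; omega]
  exact Finset.card_range c

lemma escube {n : ℕ} (hodd : Odd n) (hn : 5 ≤ n) : ∑ i, ichi (eVec n i) = 1 := by
  classical
  have h1 : scube (eVec n) = 2 * (ct (eVec n) : ℤ) - (Fintype.card (Fin n) : ℤ) := scube_eq _
  have h2 : ct (eVec n) = (n - 1) / 2 + 1 := by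
    unfold ct
    rw [show (univ.filter fun i : Fin n => eVec n i = true) =
        (univ.filter fun i : Fin n => (i : ℕ) < (n - 1) / 2 + 1) by
      ext i; simp [eVec]]
    exact card_fin_lt n _ (by obtain ⟨m, hm⟩ := hodd; omega)
  have h3 : scube (eVec n) = ∑ i, ichi (eVec n i) := rfl
  obtain ⟨m, hm⟩ := hodd
  rw [← h3, h1, h2, Fintype.card_fin]
  have : (n - 1) / 2 = m := by omega
  rw [this]
  push_cast
  omega

lemma maj_e {n : ℕ} (hodd : Odd n) (hn : 5 ≤ n) : maj n (eVec n) = 1 := by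
  rw [maj_int, escube hodd hn]
  norm_num

lemma maj_ebar {n : ℕ} (hodd : Odd n) (hn : 5 ≤ n) :
    maj n (fun i => !(eVec n i)) = -1 := by
  rw [maj_not, maj_e hodd hn]

lemma e_ne_ebar {n : ℕ} (hn : 5 ≤ n) : eVec n ≠ (fun i => !(eVec n i)) := by
  intro h
  have := congrFun h ⟨0, by omega⟩
  cases h2 : eVec n ⟨0, by omega⟩ <;> rw [h2] at this <;> simp at this

lemma gfun_eq {n : ℕ} (hodd : Odd n) (hn : 5 ≤ n) (y : Fin n → Bool) :
    gfun n y = maj n y + (if y = eVec n then (-2:ℝ) else 0) +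
      (if y = (fun i => !(eVec n i)) then (2:ℝ) else 0) := by
  unfold gfun
  by_cases h1 : y = eVec n
  · subst h1
    rw [if_pos (Or.inl rfl), if_pos rfl, if_neg (e_ne_ebar hn), maj_e hodd hn]
    norm_num
  · by_cases h2 : y = (fun i => !(eVec n i))
    · subst h2
      rw [if_pos (Or.inr rfl), if_neg h1, if_pos rfl, maj_ebar hodd hn]
      norm_num
    · rw [if_neg (by tauto), if_neg h1, if_neg h2]
      ring

/-! ### the per-subset difference -/

lemma innerPhi_diff {n : ℕ} (hodd : Odd n) (hn : 5 ≤ n) (s : Fin n → Bool) :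
    innerPhi n (gfun n) s - innerPhi n (maj n) s = (4 / 2 ^ n) * tau s := by
  classical
  by_cases hs0 : s = (fun _ => false)
  · -- empty set case: both sides are 0
    have htau : tau s = 0 := by unfold tau; rw [if_pos hs0]
    rw [htau, mul_zero, sub_eq_zero]
    have hsel : ∀ x z : Fin n → Bool, (fun i => if s i then x i else z i) = z := by
      intro x z; funext i; rw [hs0]; simp
    have hsum : ∑ z : Fin n → Bool, gfun n z = ∑ z : Fin n → Bool, maj n z := by
      rw [Finset.sum_congr rfl fun z _ => gfun_eq hodd hn z]
      rw [Finset.sum_add_distrib, Finset.sum_add_distrib]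
      rw [Finset.sum_ite_eq' univ (eVec n) (fun _ => (-2:ℝ)),
        Finset.sum_ite_eq' univ (fun i => !(eVec n i)) (fun _ => (2:ℝ))]
      simp
    unfold innerPhi
    refine congrArg _ (Finset.sum_congr rfl fun x _ => ?_)
    have e1 : (∑ z : Fin n → Bool, gfun n fun i => if s i then x i else z i) =
        ∑ z : Fin n → Bool, gfun n z :=
      Finset.sum_congr rfl fun z _ => congrArg (gfun n) (hsel x z)
    have e2 : (∑ z : Fin n → Bool, maj n fun i => if s i then x i else z i) =
        ∑ z : Fin n → Bool, maj n z :=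
      Finset.sum_congr rfl fun z _ => congrArg (maj n) (hsel x z)
    rw [e1, e2, hsum]
  · -- nonempty case
    obtain ⟨i₀, hi₀⟩ : ∃ i, s i = true := by
      by_contra h
      push_neg at h
      exact hs0 (funext fun i => by have := h i; revert this; cases s i <;> simp)
    rw [innerPhi_eq n s (gfun n), innerPhi_eq n s (maj n)]
    set k : ℕ := Fintype.card {i : Fin n // s i = true} with hk
    set m : ℕ := Fintype.card {i : Fin n // ¬ s i = true} with hm
    have hkm : k + m = n := by
      rw [hk, hm, Fintype.card_subtype_compl, Fintype.card_fin]
      have := Fintype.card_subtype_le (fun i : Fin n => s i = true)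
      rw [Fintype.card_fin] at this
      omega
    set c : ℝ := (2:ℝ) ^ k / 2 ^ n with hc
    set cm : ℝ := (2:ℝ) ^ m / 2 ^ n with hcm
    have hcpos : 0 < c := by positivity
    set Im : ({i : Fin n // s i = true} → Bool) → ℝ :=
      fun u => ∑ v : {i : Fin n // ¬ s i = true} → Bool, maj n (glue s u v) with hIm
    set Ig : ({i : Fin n // s i = true} → Bool) → ℝ :=
      fun u => ∑ v : {i : Fin n // ¬ s i = true} → Bool, gfun n (glue s u v) with hIg
    set u₁ : {i : Fin n // s i = true} → Bool := fun i => eVec n i.1 with hu₁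
    set u₂ : {i : Fin n // s i = true} → Bool := fun i => !(eVec n i.1) with hu₂
    have hne : u₁ ≠ u₂ := by
      intro h
      have := congrFun h ⟨i₀, hi₀⟩
      simp only [hu₁, hu₂] at this
      simp at this
    -- vanishing off u₁, u₂
    have hvan : ∀ u, u ≠ u₁ → u ≠ u₂ → Ig u = Im u := by
      intro u h1 h2
      show (∑ v : {i : Fin n // ¬ s i = true} → Bool, gfun n (glue s u v)) =
        ∑ v : {i : Fin n // ¬ s i = true} → Bool, maj n (glue s u v)
      refine Finset.sum_congr rfl fun v _ => ?_
      rw [gfun_eq hodd hn]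
      rw [if_neg, if_neg]
      · ring
      · intro hg
        apply h2
        funext i
        have := congrFun hg i.1
        unfold glue at this
        rw [dif_pos i.2] at this
        rw [this]
      · intro hg
        apply h1
        funext i
        have := congrFun hg i.1
        unfold glue at this
        rw [dif_pos i.2] at this
        rw [this]
    set K : ℤ := ksum {i : Fin n // ¬ s i = true} (dInt s) with hK
    have hImu₁ : Im u₁ = (K : ℝ) := by
      show (∑ v : {i : Fin n // ¬ s i = true} → Bool, maj n (glue s u₁ v)) =
        ((ksum {i : Fin n // ¬ s i = true} (dInt s) : ℤ) : ℝ)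
      rw [Finset.sum_congr rfl fun v _ => maj_glue s u₁ v]
      have hdu : duI s u₁ = dInt s := du_e s
      rw [hdu]
      unfold ksum
      push_cast
      rfl
    have hglue_e : ∀ v, glue s u₁ v = eVec n ↔ v = (fun i => eVec n i.1) := by
      intro v
      constructor
      · intro hg
        funext i
        have := congrFun hg i.1
        unfold glue at this
        rw [dif_neg i.2] at this
        rw [this]
      · intro hv
        subst hv
        funext i
        unfold glue
        by_cases h : s i = true
        · rw [dif_pos h]
        · rw [dif_neg h]
    have hglue_ne : ∀ v, glue s u₁ v ≠ (fun i => !(eVec n i)) := by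
      intro v hg
      have := congrFun hg i₀
      unfold glue at this
      rw [dif_pos hi₀] at this
      simp only [hu₁] at this
      simp at this
    have hIgu₁ : Ig u₁ = Im u₁ - 2 := by
      show (∑ v : {i : Fin n // ¬ s i = true} → Bool, gfun n (glue s u₁ v)) =
        (∑ v : {i : Fin n // ¬ s i = true} → Bool, maj n (glue s u₁ v)) - 2
      rw [Finset.sum_congr rfl fun v _ => gfun_eq hodd hn (glue s u₁ v)]
      rw [Finset.sum_add_distrib, Finset.sum_add_distrib]
      have e1 : ∑ v : {i : Fin n // ¬ s i = true} → Bool,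
          (if glue s u₁ v = eVec n then (-2:ℝ) else 0) = -2 := by
        have hcong : ∀ v : {i : Fin n // ¬ s i = true} → Bool,
            (if glue s u₁ v = eVec n then (-2:ℝ) else 0) =
            (if v = (fun i : {i : Fin n // ¬ s i = true} => eVec n i.1) then (-2:ℝ) else 0) :=
          fun v => by simp only [hglue_e v]
        rw [Finset.sum_congr rfl fun v _ => hcong v]
        rw [Finset.sum_ite_eq' univ (fun i : {i : Fin n // ¬ s i = true} => eVec n i.1)
          (fun _ => (-2:ℝ))]
        simp
      have e2 : ∑ v : {i : Fin n // ¬ s i = true} → Bool,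
          (if glue s u₁ v = (fun i => !(eVec n i)) then (2:ℝ) else 0) = 0 := by
        refine Finset.sum_eq_zero fun v _ => ?_
        rw [if_neg (hglue_ne v)]
      rw [e1, e2]
      ring
    -- u₂ facts via the involution
    have hglue_not : ∀ v, glue s u₂ (fun i => !(v i)) = fun j => !(glue s u₁ v j) := by
      intro v
      funext j
      unfold glue
      by_cases h : s j = true
      · rw [dif_pos h, dif_pos h]
      · rw [dif_neg h, dif_neg h]
    have hinv : Function.Involutive (fun v : {i : Fin n // ¬ s i = true} → Bool =>
        (fun i => !(v i))) := by intro v; funext i; simp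
    have hImu₂ : Im u₂ = -(K : ℝ) := by
      show (∑ v : {i : Fin n // ¬ s i = true} → Bool, maj n (glue s u₂ v)) = -(K : ℝ)
      rw [← Equiv.sum_comp hinv.toPerm (fun v => maj n (glue s u₂ v))]
      simp only [Function.Involutive.toPerm, Equiv.coe_fn_mk]
      have hstep : ∀ v : {i : Fin n // ¬ s i = true} → Bool,
          maj n (glue s u₂ (fun i => !(v i))) = - maj n (glue s u₁ v) := by
        intro v
        rw [hglue_not v, maj_not]
      rw [Finset.sum_congr rfl fun v _ => hstep v]
      rw [Finset.sum_neg_distrib]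
      rw [show (∑ v : {i : Fin n // ¬ s i = true} → Bool, maj n (glue s u₁ v)) = Im u₁ from rfl]
      rw [hImu₁]
    have hglue_e2 : ∀ v, glue s u₂ v = (fun i => !(eVec n i)) ↔
        v = (fun i : {i : Fin n // ¬ s i = true} => !(eVec n i.1)) := by
      intro v
      constructor
      · intro hg
        funext i
        have := congrFun hg i.1
        unfold glue at this
        rw [dif_neg i.2] at this
        rw [this]
      · intro hv
        subst hv
        funext i
        unfold glue
        by_cases h : s i = true
        · rw [dif_pos h]
        · rw [dif_neg h]
    have hglue_ne2 : ∀ v, glue s u₂ v ≠ eVec n := by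
      intro v hg
      have := congrFun hg i₀
      unfold glue at this
      rw [dif_pos hi₀] at this
      simp only [hu₂] at this
      simp at this
    have hIgu₂ : Ig u₂ = Im u₂ + 2 := by
      show (∑ v : {i : Fin n // ¬ s i = true} → Bool, gfun n (glue s u₂ v)) =
        (∑ v : {i : Fin n // ¬ s i = true} → Bool, maj n (glue s u₂ v)) + 2
      rw [Finset.sum_congr rfl fun v _ => gfun_eq hodd hn (glue s u₂ v)]
      rw [Finset.sum_add_distrib, Finset.sum_add_distrib]
      have e1 : ∑ v : {i : Fin n // ¬ s i = true} → Bool,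
          (if glue s u₂ v = eVec n then (-2:ℝ) else 0) = 0 := by
        refine Finset.sum_eq_zero fun v _ => ?_
        rw [if_neg (hglue_ne2 v)]
      have e2 : ∑ v : {i : Fin n // ¬ s i = true} → Bool,
          (if glue s u₂ v = (fun i => !(eVec n i)) then (2:ℝ) else 0) = 2 := by
        have hcong : ∀ v : {i : Fin n // ¬ s i = true} → Bool,
            (if glue s u₂ v = (fun i => !(eVec n i)) then (2:ℝ) else 0) =
            (if v = (fun i : {i : Fin n // ¬ s i = true} => !(eVec n i.1)) then (2:ℝ) else 0) :=
          fun v => by simp only [hglue_e2 v]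
        rw [Finset.sum_congr rfl fun v _ => hcong v]
        rw [Finset.sum_ite_eq' univ (fun i : {i : Fin n // ¬ s i = true} => !(eVec n i.1))
          (fun _ => (2:ℝ))]
        simp
      rw [e1, e2]
      ring
    -- collapse the u-sum to the two special points
    have hsum : ∑ u : {i : Fin n // s i = true} → Bool, (|c * Ig u| - |c * Im u|) =
        (|c * Ig u₁| - |c * Im u₁|) + (|c * Ig u₂| - |c * Im u₂|) := by
      have h0 : ∀ u ∈ (univ : Finset ({i : Fin n // s i = true} → Bool)),
          u ∉ ({u₁, u₂} : Finset ({i : Fin n // s i = true} → Bool)) →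
          |c * Ig u| - |c * Im u| = 0 := by
        intro u _ hu
        rw [Finset.mem_insert, Finset.mem_singleton] at hu
        push_neg at hu
        rw [hvan u hu.1 hu.2]
        ring
      calc ∑ u : {i : Fin n // s i = true} → Bool, (|c * Ig u| - |c * Im u|)
          = ∑ u ∈ ({u₁, u₂} : Finset ({i : Fin n // s i = true} → Bool)),
            (|c * Ig u| - |c * Im u|) :=
            (Finset.sum_subset (Finset.subset_univ _) h0).symm
        _ = _ := Finset.sum_pair hne
    have key : (2:ℝ) ^ m * 2 ^ k = 2 ^ n := by
      rw [← pow_add]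
      congr 1
      omega
    have main : cm * (∑ u : {i : Fin n // s i = true} → Bool, |c * Ig u|) -
        cm * (∑ u : {i : Fin n // s i = true} → Bool, |c * Im u|) = (4 / 2 ^ n) * tau s := by
      rw [← mul_sub, ← Finset.sum_sub_distrib, hsum, hIgu₁, hIgu₂, hImu₁, hImu₂]
      have h1 : |c * (-(K:ℝ) + 2)| = |c * ((K:ℝ) - 2)| := by
        rw [show c * (-(K:ℝ) + 2) = -(c * ((K:ℝ) - 2)) by ring, abs_neg]
      have h2 : |c * (-(K:ℝ))| = |c * (K:ℝ)| := by
        rw [show c * (-(K:ℝ)) = -(c * (K:ℝ)) by ring, abs_neg]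
      rw [h1, h2]
      by_cases hst : s = (fun _ => true)
      · have hm0 : Fintype.card {i : Fin n // ¬ s i = true} = 0 := by
          rw [Fintype.card_eq_zero_iff]
          exact ⟨fun i => i.2 (congrFun hst i.1)⟩
        have hdil : dInt s = 1 := by
          unfold dInt
          rw [Finset.sum_congr rfl fun i _ => if_pos (congrFun hst i)]
          exact escube hodd hn
        have hK1 : K = 1 := by
          rw [hK, ksum_empty _ hm0, hdil]
          rfl
        have htau : tau s = 0 := by unfold tau; rw [if_neg hs0, if_pos hst]
        rw [hK1, htau]
        push_cast
        rw [show c * ((1:ℝ) - 2) = -c by ring, abs_neg, abs_of_pos hcpos,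
          show c * (1:ℝ) = c by ring, abs_of_pos hcpos]
        ring
      · by_cases hd : dInt s ≤ 0
        · have hKle : (K:ℝ) ≤ 0 := by
            have := ksum_nonpos {i : Fin n // ¬ s i = true} hd
            rw [← hK] at this
            exact_mod_cast this
          have ha1 : |c * ((K:ℝ) - 2)| = -(c * ((K:ℝ) - 2)) :=
            abs_of_nonpos (by nlinarith)
          have ha2 : |c * (K:ℝ)| = -(c * (K:ℝ)) :=
            abs_of_nonpos (by nlinarith)
          have htau : tau s = 1 := by unfold tau; rw [if_neg hs0, if_neg hst, if_pos hd]
          rw [ha1, ha2, htau, hc, hcm]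
          field_simp
          linear_combination (4:ℝ) * key
        · have hm1 : 1 ≤ Fintype.card {i : Fin n // ¬ s i = true} := by
            have : Nonempty {i : Fin n // ¬ s i = true} := by
              by_contra h
              rw [not_nonempty_iff] at h
              exact hst (funext fun i => by
                by_contra hsi
                exact h.false ⟨i, hsi⟩)
            exact Fintype.card_pos_iff.mpr this
          push_neg at hd
          have hpar : Odd (dInt s + (Fintype.card {i : Fin n // ¬ s i = true} : ℤ)) := by
            have hev := dInt_add_card_even s
            obtain ⟨a, ha⟩ := hev
            obtain ⟨b, hb⟩ := hodd
            have hkm' : Fintype.card {i : Fin n // s i = true} +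
                Fintype.card {i : Fin n // ¬ s i = true} = n := by
              rw [← hk, ← hm]; exact hkm
            rw [Int.odd_iff]
            omega
          have hKge : (2:ℝ) ≤ (K:ℝ) := by
            have := ksum_ge_two {i : Fin n // ¬ s i = true} (by omega) hm1 hpar
            rw [← hK] at this
            exact_mod_cast this
          have ha1 : |c * ((K:ℝ) - 2)| = c * ((K:ℝ) - 2) :=
            abs_of_nonneg (by nlinarith)
          have ha2 : |c * (K:ℝ)| = c * (K:ℝ) :=
            abs_of_nonneg (by nlinarith)
          have htau : tau s = -1 := by
            unfold tau; rw [if_neg hs0, if_neg hst, if_neg (by omega)]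
          rw [ha1, ha2, htau, hc, hcm]
          field_simp
          linear_combination (-(4:ℝ)) * key
    exact main

/-! ### cube to binomial sums -/

lemma ct_false_iff {α : Type*} [Fintype α] [DecidableEq α] (σ : α → Bool) :
    ct σ = 0 ↔ σ = (fun _ => false) := by
  unfold ct
  rw [Finset.card_eq_zero, Finset.filter_eq_empty_iff]
  constructor
  · intro h
    funext i
    have := h (Finset.mem_univ i)
    revert this
    cases σ i <;> simp
  · intro h i _
    rw [h]
    simp

lemma ct_true_iff {α : Type*} [Fintype α] [DecidableEq α] (σ : α → Bool) :
    ct σ = Fintype.card α ↔ σ = (fun _ => true) := by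
  unfold ct
  constructor
  · intro h
    have heq : (univ : Finset α) = univ.filter (fun i => σ i = true) :=
      (Finset.eq_of_subset_of_card_le (Finset.filter_subset _ _)
        (le_of_eq (by rw [Finset.card_univ, h]))).symm
    funext i
    have hi : i ∈ univ.filter (fun i => σ i = true) := heq ▸ Finset.mem_univ i
    exact (Finset.mem_filter.mp hi).2
  · intro h
    rw [h]
    simp [Finset.filter_true_of_mem, Finset.card_univ]

lemma cube_sum {α : Type*} [Fintype α] [DecidableEq α] (r t : ℝ) (G : ℕ → ℝ) :
    ∑ σ : α → Bool, (∏ i, if σ i then r else t) * G (ct σ) =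
      ∑ j ∈ range (Fintype.card α + 1),
        ((Fintype.card α).choose j : ℝ) * (r ^ j * t ^ (Fintype.card α - j) * G j) := by
  classical
  have step1 : ∑ σ : α → Bool, (∏ i, if σ i then r else t) * G (ct σ) =
      ∑ T ∈ (univ : Finset α).powerset,
        r ^ T.card * t ^ (Fintype.card α - T.card) * G T.card := by
    refine Finset.sum_nbij' (fun σ => univ.filter (fun i => σ i = true))
      (fun T => fun i => decide (i ∈ T)) (fun σ _ => Finset.mem_powerset.mpr
        (Finset.filter_subset _ _)) (fun T _ => Finset.mem_univ _) ?_ ?_ ?_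
    · intro σ _
      funext i
      by_cases h : σ i = true <;> simp [h]
    · intro T _
      ext i
      simp
    · intro σ _
      have hct : (univ.filter (fun i => σ i = true)).card = ct σ := rfl
      rw [hct]
      congr 1
      · -- product equals r^ct * t^(card - ct)
        have hsub : univ.filter (fun i => σ i = true) ⊆ univ := Finset.filter_subset _ _
        rw [← Finset.prod_sdiff hsub]
        have h1 : ∏ i ∈ univ.filter (fun i => σ i = true), (if σ i then r else t) =
            r ^ ct σ := by
          rw [Finset.prod_congr rfl fun i hi => if_pos (Finset.mem_filter.mp hi).2,
            Finset.prod_const]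
          rfl
        have h2 : ∏ i ∈ univ \ univ.filter (fun i => σ i = true), (if σ i then r else t) =
            t ^ (Fintype.card α - ct σ) := by
          rw [Finset.prod_congr rfl fun i hi => if_neg (by
            rcases Finset.mem_sdiff.mp hi with ⟨-, h2⟩
            intro hc
            exact h2 (Finset.mem_filter.mpr ⟨Finset.mem_univ i, hc⟩))]
          rw [Finset.prod_const, Finset.card_sdiff_of_subset hsub, Finset.card_univ]
          rfl
        rw [h1, h2]
        ring
  rw [step1]
  refine (Finset.sum_powerset_apply_card
    (fun j => r ^ j * t ^ (Fintype.card α - j) * G j) (x := (univ : Finset α))).trans ?_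
  refine Finset.sum_congr (by rw [Finset.card_univ]) fun j _ => ?_
  rw [nsmul_eq_mul, Finset.card_univ]

/-! ### range sum identities -/

lemma sgn_pair_le (a b : ℕ) :
    (if a ≤ b then (1:ℝ) else -1) + (if b ≤ a then (1:ℝ) else -1) =
      2 * (if a = b then (1:ℝ) else 0) := by
  rcases Nat.lt_trichotomy a b with h | h | h
  · rw [if_pos (le_of_lt h), if_neg (by omega), if_neg (by omega)]; ring
  · rw [if_pos (le_of_eq h), if_pos (le_of_eq h.symm), if_pos h]; ring
  · rw [if_neg (by omega), if_pos (le_of_lt h), if_neg (by omega)]; ring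

lemma sgn_pair_lt (a b : ℕ) :
    (if a < b then (1:ℝ) else -1) + (if b < a then (1:ℝ) else -1) =
      -2 * (if a = b then (1:ℝ) else 0) := by
  rcases Nat.lt_trichotomy a b with h | h | h
  · rw [if_pos h, if_neg (by omega), if_neg (by omega)]; ring
  · rw [if_neg (by omega), if_neg (by omega), if_pos h]; ring
  · rw [if_neg (by omega), if_pos h, if_neg (by omega)]; ring

lemma diag_sum (m : ℕ) (f : ℕ → ℝ) (C : ℝ) :
    ∑ a ∈ range m, ∑ b ∈ range m, (f a * f b) * (C * (if a = b then (1:ℝ) else 0)) =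
      C * ∑ a ∈ range m, (f a)^2 := by
  rw [Finset.mul_sum]
  refine Finset.sum_congr rfl fun a ha => ?_
  have h1 : ∀ b ∈ range m, (f a * f b) * (C * (if a = b then (1:ℝ) else 0)) =
      if a = b then C * (f a * f b) else 0 := by
    intro b _
    by_cases h : a = b
    · rw [if_pos h, if_pos h]; ring
    · rw [if_neg h, if_neg h]; ring
  rw [Finset.sum_congr rfl h1, Finset.sum_ite_eq (range m) a (fun b => C * (f a * f b)),
    if_pos ha]
  ring

lemma rangeQ (m : ℕ) (f : ℕ → ℝ) :
    ∑ a ∈ range m, ∑ b ∈ range m, (f a * f b) * (if a ≤ b then (1:ℝ) else -1) =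
      ∑ a ∈ range m, (f a)^2 := by
  have hswap : ∑ a ∈ range m, ∑ b ∈ range m, (f a * f b) * (if a ≤ b then (1:ℝ) else -1) =
      ∑ a ∈ range m, ∑ b ∈ range m, (f a * f b) * (if b ≤ a then (1:ℝ) else -1) := by
    rw [Finset.sum_comm]
    refine Finset.sum_congr rfl fun a _ => Finset.sum_congr rfl fun b _ => ?_
    ring
  have hdouble : (∑ a ∈ range m, ∑ b ∈ range m, (f a * f b) * (if a ≤ b then (1:ℝ) else -1))
      + ∑ a ∈ range m, ∑ b ∈ range m, (f a * f b) * (if b ≤ a then (1:ℝ) else -1) =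
      2 * ∑ a ∈ range m, (f a)^2 := by
    rw [← Finset.sum_add_distrib]
    rw [Finset.sum_congr rfl fun a _ => (Finset.sum_add_distrib).symm]
    rw [← diag_sum m f 2]
    refine Finset.sum_congr rfl fun a _ => Finset.sum_congr rfl fun b _ => ?_
    rw [← mul_add, sgn_pair_le]
  linarith [hswap, hdouble]

lemma rangeQ' (m : ℕ) (f : ℕ → ℝ) :
    ∑ a ∈ range m, ∑ b ∈ range m, (f a * f b) * (if a < b then (1:ℝ) else -1) =
      - ∑ a ∈ range m, (f a)^2 := by
  have hswap : ∑ a ∈ range m, ∑ b ∈ range m, (f a * f b) * (if a < b then (1:ℝ) else -1) =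
      ∑ a ∈ range m, ∑ b ∈ range m, (f a * f b) * (if b < a then (1:ℝ) else -1) := by
    rw [Finset.sum_comm]
    refine Finset.sum_congr rfl fun a _ => Finset.sum_congr rfl fun b _ => ?_
    ring
  have hdouble : (∑ a ∈ range m, ∑ b ∈ range m, (f a * f b) * (if a < b then (1:ℝ) else -1))
      + ∑ a ∈ range m, ∑ b ∈ range m, (f a * f b) * (if b < a then (1:ℝ) else -1) =
      -2 * ∑ a ∈ range m, (f a)^2 := by
    rw [← Finset.sum_add_distrib]
    rw [Finset.sum_congr rfl fun a _ => (Finset.sum_add_distrib).symm]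
    rw [← diag_sum m f (-2)]
    refine Finset.sum_congr rfl fun a _ => Finset.sum_congr rfl fun b _ => ?_
    rw [← mul_add, sgn_pair_lt]
  linarith [hswap, hdouble]

lemma pascal_split (m : ℕ) (p q : ℝ) (G : ℕ → ℝ) :
    ∑ a ∈ range (m+2), (((m+1).choose a : ℝ) * p^a * q^(m+1-a)) * G a =
      q * ∑ a ∈ range (m+1), ((m.choose a : ℝ) * p^a * q^(m-a)) * G a +
      p * ∑ a ∈ range (m+1), ((m.choose a : ℝ) * p^a * q^(m-a)) * G (a+1) := by
  rw [Finset.sum_range_succ' (fun a => (((m+1).choose a : ℝ) * p^a * q^(m+1-a)) * G a) (m+1)]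
  have hterm : ∀ a ∈ range (m+1), ((((m+1).choose (a+1) : ℝ)) * p^(a+1) * q^(m+1-(a+1))) * G (a+1) =
      ((m.choose a : ℝ) * p^a * q^(m-a)) * (p * G (a+1)) +
      ((m.choose (a+1) : ℝ) * p^(a+1) * q^(m-a)) * G (a+1) := by
    intro a _
    have h1 : m + 1 - (a+1) = m - a := by omega
    have h2 : ((m+1).choose (a+1) : ℝ) = (m.choose a : ℝ) + (m.choose (a+1) : ℝ) := by
      rw [Nat.choose_succ_succ]
      push_cast
      ring
    rw [h1, h2]
    ring
  rw [Finset.sum_congr rfl hterm, Finset.sum_add_distrib]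
  have hq : q * ∑ a ∈ range (m+1), ((m.choose a : ℝ) * p^a * q^(m-a)) * G a =
      (∑ a ∈ range (m+1), ((m.choose (a+1) : ℝ) * p^(a+1) * q^(m-a)) * G (a+1)) +
      (((m+1).choose 0 : ℝ) * p^0 * q^(m+1-0)) * G 0 := by
    rw [Finset.sum_range_succ' (fun a => ((m.choose a : ℝ) * p^a * q^(m-a)) * G a) m]
    rw [Finset.sum_range_succ (fun a => ((m.choose (a+1) : ℝ) * p^(a+1) * q^(m-a)) * G (a+1)) m]
    rw [Nat.choose_succ_self]
    have hstep : ∀ a ∈ range m, q * (((m.choose (a+1) : ℝ) * p^(a+1) * q^(m-(a+1))) * G (a+1)) =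
        ((m.choose (a+1) : ℝ) * p^(a+1) * q^(m-a)) * G (a+1) := by
      intro a ha
      have : m - a = (m - (a+1)) + 1 := by
        rw [Finset.mem_range] at ha
        omega
      rw [this, pow_succ]
      ring
    rw [mul_add, Finset.mul_sum, Finset.sum_congr rfl hstep]
    push_cast [Nat.choose_zero_right, Nat.sub_zero]
    ring
  have hp : p * ∑ a ∈ range (m+1), ((m.choose a : ℝ) * p^a * q^(m-a)) * G (a+1) =
      ∑ a ∈ range (m+1), ((m.choose a : ℝ) * p^a * q^(m-a)) * (p * G (a+1)) := by
    rw [Finset.mul_sum]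
    exact Finset.sum_congr rfl fun a _ => by ring
  rw [hq, hp]
  ring

lemma delta_sum (m : ℕ) (a₀ : ℕ) (ha : a₀ ∈ range m) (F : ℕ → ℝ) (c : ℝ) :
    ∑ a ∈ range m, F a * (if a = a₀ then c else 0) = F a₀ * c := by
  have h1 : ∀ a ∈ range m, F a * (if a = a₀ then c else 0) =
      if a = a₀ then F a₀ * c else 0 := by
    intro a _
    by_cases h : a = a₀
    · rw [if_pos h, if_pos h, h]
    · rw [if_neg h, if_neg h, mul_zero]
  rw [Finset.sum_congr rfl h1, Finset.sum_ite_eq' (range m) a₀ (fun _ => F a₀ * c), if_pos ha]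

lemma ite_mul_simp (P : Prop) [Decidable P] (c : ℝ) :
    (if P then (1:ℝ) else 0) * c = (if P then c else 0) := by
  by_cases h : P <;> simp [h]

lemma range_eval (h : ℕ) (p q : ℝ) :
    (∑ a ∈ range (h+2), (((h+1).choose a : ℝ) * p^a * q^(h+1-a)) *
      (∑ b ∈ range (h+1), ((h.choose b : ℝ) * p^b * q^(h-b)) *
        (if a = 0 ∧ b = 0 then (0:ℝ) else if a = h+1 ∧ b = h then 0 else
          if a ≤ b then 1 else -1))) =
    (q - p) * (∑ b ∈ range (h+1), ((h.choose b : ℝ) * p^b * q^(h-b))^2)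
      + p^(2*h+1) - q^(2*h+1) := by
  have hpsi : ∀ a b : ℕ,
      (if a = 0 ∧ b = 0 then (0:ℝ) else if a = h+1 ∧ b = h then 0 else
        if a ≤ b then 1 else -1) =
      (if a ≤ b then (1:ℝ) else -1) +
      ((if a = 0 then (1:ℝ) else 0) * (if b = 0 then (-1:ℝ) else 0)) +
      ((if a = h+1 then (1:ℝ) else 0) * (if b = h then (1:ℝ) else 0)) := by
    intro a b
    by_cases h1 : a = 0 ∧ b = 0
    · rw [if_pos h1, if_pos h1.1, if_pos h1.2, if_pos (by omega : a ≤ b),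
        if_neg (by omega : ¬ a = h + 1)]
      ring
    · rw [if_neg h1]
      by_cases h2 : a = h+1 ∧ b = h
      · rw [if_pos h2, if_pos h2.1, if_pos h2.2, if_neg (by omega : ¬ a ≤ b),
          if_neg (by omega : ¬ a = 0)]
        ring
      · rw [if_neg h2]
        have hz : (if a = 0 then (1:ℝ) else 0) * (if b = 0 then (-1:ℝ) else 0) = 0 := by
          by_cases ha : a = 0
          · rw [if_neg (by tauto : ¬ b = 0), mul_zero]
          · rw [if_neg ha, zero_mul]
        have hz2 : (if a = h+1 then (1:ℝ) else 0) * (if b = h then (1:ℝ) else 0) = 0 := by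
          by_cases ha : a = h+1
          · rw [if_neg (by tauto : ¬ b = h), mul_zero]
          · rw [if_neg ha, zero_mul]
        rw [hz, hz2]
        ring
  -- rewrite inner sums
  have hinner : ∀ a : ℕ,
      (∑ b ∈ range (h+1), ((h.choose b : ℝ) * p^b * q^(h-b)) *
        (if a = 0 ∧ b = 0 then (0:ℝ) else if a = h+1 ∧ b = h then 0 else
          if a ≤ b then 1 else -1)) =
      (∑ b ∈ range (h+1), ((h.choose b : ℝ) * p^b * q^(h-b)) *
        (if a ≤ b then (1:ℝ) else -1)) +
      (if a = 0 then (1:ℝ) else 0) * (-(q^h)) +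
      (if a = h+1 then (1:ℝ) else 0) * (p^h) := by
    intro a
    rw [Finset.sum_congr rfl fun b _ => by rw [hpsi a b]]
    rw [Finset.sum_congr rfl fun b _ => (by ring :
      ((h.choose b : ℝ) * p^b * q^(h-b)) *
        ((if a ≤ b then (1:ℝ) else -1) +
        ((if a = 0 then (1:ℝ) else 0) * (if b = 0 then (-1:ℝ) else 0)) +
        ((if a = h+1 then (1:ℝ) else 0) * (if b = h then (1:ℝ) else 0))) =
      ((h.choose b : ℝ) * p^b * q^(h-b)) * (if a ≤ b then (1:ℝ) else -1) +
      (if a = 0 then (1:ℝ) else 0) * (((h.choose b : ℝ) * p^b * q^(h-b)) * (if b = 0 then (-1:ℝ) else 0)) +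
      (if a = h+1 then (1:ℝ) else 0) * (((h.choose b : ℝ) * p^b * q^(h-b)) * (if b = h then (1:ℝ) else 0)))]
    rw [Finset.sum_add_distrib, Finset.sum_add_distrib, ← Finset.mul_sum, ← Finset.mul_sum]
    have hd1 : ∑ b ∈ range (h+1), ((h.choose b : ℝ) * p^b * q^(h-b)) *
        (if b = 0 then (-1:ℝ) else 0) = -(q^h) := by
      rw [delta_sum (h+1) 0 (by simp) (fun b => (h.choose b : ℝ) * p^b * q^(h-b)) (-1)]
      norm_num
    have hd2 : ∑ b ∈ range (h+1), ((h.choose b : ℝ) * p^b * q^(h-b)) *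
        (if b = h then (1:ℝ) else 0) = p^h := by
      rw [delta_sum (h+1) h (by simp) (fun b => (h.choose b : ℝ) * p^b * q^(h-b)) 1]
      simp [Nat.choose_self]
    rw [hd1, hd2]
  rw [Finset.sum_congr rfl fun a _ => by rw [hinner a]]
  rw [Finset.sum_congr rfl fun a _ => (by rw [ite_mul_simp, ite_mul_simp]; ring :
    (((h+1).choose a : ℝ) * p^a * q^(h+1-a)) *
      ((∑ b ∈ range (h+1), ((h.choose b : ℝ) * p^b * q^(h-b)) * (if a ≤ b then (1:ℝ) else -1)) +
      (if a = 0 then (1:ℝ) else 0) * (-(q^h)) +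
      (if a = h+1 then (1:ℝ) else 0) * (p^h)) =
    (((h+1).choose a : ℝ) * p^a * q^(h+1-a)) *
      (∑ b ∈ range (h+1), ((h.choose b : ℝ) * p^b * q^(h-b)) * (if a ≤ b then (1:ℝ) else -1)) +
    ((((h+1).choose a : ℝ) * p^a * q^(h+1-a)) * (if a = 0 then (-(q^h)) else 0)) +
    ((((h+1).choose a : ℝ) * p^a * q^(h+1-a)) * (if a = h+1 then (p^h) else 0)))]
  rw [Finset.sum_add_distrib, Finset.sum_add_distrib]
  have hD1 : ∑ a ∈ range (h+2), (((h+1).choose a : ℝ) * p^a * q^(h+1-a)) *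
      (if a = 0 then (-(q^h)) else 0) = -(q^(2*h+1)) := by
    rw [delta_sum (h+2) 0 (by simp) (fun a => ((h+1).choose a : ℝ) * p^a * q^(h+1-a)) (-(q^h))]
    norm_num
    ring
  have hD2 : ∑ a ∈ range (h+2), (((h+1).choose a : ℝ) * p^a * q^(h+1-a)) *
      (if a = h+1 then (p^h) else 0) = p^(2*h+1) := by
    rw [delta_sum (h+2) (h+1) (by simp) (fun a => ((h+1).choose a : ℝ) * p^a * q^(h+1-a)) (p^h)]
    simp [Nat.choose_self]
    ring
  have hS : ∑ a ∈ range (h+2), (((h+1).choose a : ℝ) * p^a * q^(h+1-a)) *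
      (∑ b ∈ range (h+1), ((h.choose b : ℝ) * p^b * q^(h-b)) * (if a ≤ b then (1:ℝ) else -1)) =
      (q - p) * (∑ b ∈ range (h+1), ((h.choose b : ℝ) * p^b * q^(h-b))^2) := by
    rw [pascal_split h p q (fun a => ∑ b ∈ range (h+1),
      ((h.choose b : ℝ) * p^b * q^(h-b)) * (if a ≤ b then (1:ℝ) else -1))]
    have hQ : ∑ a ∈ range (h+1), ((h.choose a : ℝ) * p^a * q^(h-a)) *
        (∑ b ∈ range (h+1), ((h.choose b : ℝ) * p^b * q^(h-b)) * (if a ≤ b then (1:ℝ) else -1)) =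
        ∑ b ∈ range (h+1), ((h.choose b : ℝ) * p^b * q^(h-b))^2 := by
      rw [← rangeQ (h+1) (fun b => (h.choose b : ℝ) * p^b * q^(h-b))]
      refine Finset.sum_congr rfl fun a _ => ?_
      rw [Finset.mul_sum]
      exact Finset.sum_congr rfl fun b _ => by ring
    have hQ' : ∑ a ∈ range (h+1), ((h.choose a : ℝ) * p^a * q^(h-a)) *
        (∑ b ∈ range (h+1), ((h.choose b : ℝ) * p^b * q^(h-b)) *
          (if a + 1 ≤ b then (1:ℝ) else -1)) =
        -∑ b ∈ range (h+1), ((h.choose b : ℝ) * p^b * q^(h-b))^2 := by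
      rw [← rangeQ' (h+1) (fun b => (h.choose b : ℝ) * p^b * q^(h-b))]
      refine Finset.sum_congr rfl fun a _ => ?_
      rw [Finset.mul_sum]
      refine Finset.sum_congr rfl fun b _ => ?_
      have hiff : (a + 1 ≤ b) ↔ (a < b) := by omega
      by_cases hab : a < b
      · rw [if_pos (hiff.mpr hab), if_pos hab]; ring
      · rw [if_neg (fun hc => hab (hiff.mp hc)), if_neg hab]; ring
    rw [hQ, hQ']
    ring
  rw [hS, hD1, hD2]
  ring

/-! ### splitting the weight and tau along eVec -/

lemma prod_split {n : ℕ} (s : Fin n → Bool) (F : Fin n → ℝ) :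
    ∏ i, F i = (∏ i : {i : Fin n // s i = true}, F i.1) *
      ∏ i : {i : Fin n // ¬ s i = true}, F i.1 := by
  classical
  rw [← Finset.prod_filter_mul_prod_filter_not univ (fun i => s i = true) F]
  congr 1
  · exact Finset.prod_subtype _ (by simp) F
  · exact Finset.prod_subtype _ (by simp) F

lemma weight_glue {n : ℕ} (p : ℝ) (σA : {i : Fin n // eVec n i = true} → Bool)
    (σB : {i : Fin n // ¬ eVec n i = true} → Bool) :
    (∏ i, if glue (eVec n) σA σB i then p else 1-p) =
      (∏ i : {i : Fin n // eVec n i = true}, if σA i then p else 1-p) *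
      (∏ i : {i : Fin n // ¬ eVec n i = true}, if σB i then p else 1-p) := by
  rw [prod_split (eVec n) (fun i => if glue (eVec n) σA σB i then p else 1-p)]
  congr 1
  · refine Finset.prod_congr rfl fun i _ => ?_
    have hg : glue (eVec n) σA σB i.1 = σA i := by unfold glue; rw [dif_pos i.2]
    rw [hg]
  · refine Finset.prod_congr rfl fun i _ => ?_
    have hg : glue (eVec n) σA σB i.1 = σB i := by unfold glue; rw [dif_neg i.2]
    rw [hg]

lemma dInt_glue {n : ℕ} (σA : {i : Fin n // eVec n i = true} → Bool)
    (σB : {i : Fin n // ¬ eVec n i = true} → Bool) :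
    dInt (glue (eVec n) σA σB) = (ct σA : ℤ) - (ct σB : ℤ) := by
  classical
  unfold dInt
  rw [sum_split (eVec n) (fun i => if glue (eVec n) σA σB i then ichi (eVec n i) else 0)]
  have hA : (∑ i : {i : Fin n // eVec n i = true},
      if glue (eVec n) σA σB i.1 then ichi (eVec n i.1) else 0) = (ct σA : ℤ) := by
    have hpt : ∀ i : {i : Fin n // eVec n i = true},
        (if glue (eVec n) σA σB i.1 then ichi (eVec n i.1) else 0) =
        (if σA i = true then (1:ℤ) else 0) := by
      intro i
      have hg : glue (eVec n) σA σB i.1 = σA i := by unfold glue; rw [dif_pos i.2]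
      have hi : ichi (eVec n i.1) = 1 := by rw [show eVec n i.1 = true from i.2]; rfl
      rw [hg, hi]
    rw [Finset.sum_congr rfl fun i _ => hpt i, Finset.sum_boole]
    rfl
  have hB : (∑ i : {i : Fin n // ¬ eVec n i = true},
      if glue (eVec n) σA σB i.1 then ichi (eVec n i.1) else 0) = -(ct σB : ℤ) := by
    have hpt : ∀ i : {i : Fin n // ¬ eVec n i = true},
        (if glue (eVec n) σA σB i.1 then ichi (eVec n i.1) else 0) =
        -(if σB i = true then (1:ℤ) else 0) := by
      intro i
      have hg : glue (eVec n) σA σB i.1 = σB i := by unfold glue; rw [dif_neg i.2]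
      have hfalse : eVec n i.1 = false := by
        cases hb : eVec n i.1
        · rfl
        · exact absurd hb i.2
      have hi : ichi (eVec n i.1) = -1 := by rw [hfalse]; rfl
      rw [hg, hi]
      by_cases hs : σB i = true
      · rw [if_pos hs, if_pos hs]
      · rw [if_neg hs, if_neg hs]
        ring
    rw [Finset.sum_congr rfl fun i _ => hpt i, Finset.sum_neg_distrib]
    congr 1
    rw [Finset.sum_boole]
    rfl
  rw [hA, hB]
  ring

lemma glue_false_iff {n : ℕ} (s : Fin n → Bool) (σA : {i : Fin n // s i = true} → Bool)
    (σB : {i : Fin n // ¬ s i = true} → Bool) :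
    glue s σA σB = (fun _ => false) ↔
      (σA = fun _ => false) ∧ (σB = fun _ => false) := by
  constructor
  · intro hg
    constructor
    · funext i
      have := congrFun hg i.1
      unfold glue at this
      rw [dif_pos i.2] at this
      exact this
    · funext i
      have := congrFun hg i.1
      unfold glue at this
      rw [dif_neg i.2] at this
      exact this
  · rintro ⟨h1, h2⟩
    funext i
    unfold glue
    by_cases hi : s i = true
    · rw [dif_pos hi, h1]
    · rw [dif_neg hi, h2]

lemma glue_true_iff {n : ℕ} (s : Fin n → Bool) (σA : {i : Fin n // s i = true} → Bool)
    (σB : {i : Fin n // ¬ s i = true} → Bool) :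
    glue s σA σB = (fun _ => true) ↔
      (σA = fun _ => true) ∧ (σB = fun _ => true) := by
  constructor
  · intro hg
    constructor
    · funext i
      have := congrFun hg i.1
      unfold glue at this
      rw [dif_pos i.2] at this
      exact this
    · funext i
      have := congrFun hg i.1
      unfold glue at this
      rw [dif_neg i.2] at this
      exact this
  · rintro ⟨h1, h2⟩
    funext i
    unfold glue
    by_cases hi : s i = true
    · rw [dif_pos hi, h1]
    · rw [dif_neg hi, h2]

lemma cardA {n : ℕ} (hodd : Odd n) (hn : 5 ≤ n) :
    Fintype.card {i : Fin n // eVec n i = true} = (n-1)/2 + 1 := by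
  rw [Fintype.card_subtype]
  rw [show (univ.filter fun i : Fin n => eVec n i = true) =
      (univ.filter fun i : Fin n => (i : ℕ) < (n-1)/2 + 1) by
    ext i; simp [eVec]]
  exact card_fin_lt n _ (by obtain ⟨m, hm⟩ := hodd; omega)

lemma cardB {n : ℕ} (hodd : Odd n) (hn : 5 ≤ n) :
    Fintype.card {i : Fin n // ¬ eVec n i = true} = (n-1)/2 := by
  rw [Fintype.card_subtype_compl, cardA hodd hn, Fintype.card_fin]
  obtain ⟨m, hm⟩ := hodd
  omega

lemma tau_glue {n : ℕ} (hodd : Odd n) (hn : 5 ≤ n)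
    (σA : {i : Fin n // eVec n i = true} → Bool)
    (σB : {i : Fin n // ¬ eVec n i = true} → Bool) :
    tau (glue (eVec n) σA σB) =
      (if ct σA = 0 ∧ ct σB = 0 then (0:ℝ)
        else if ct σA = (n-1)/2 + 1 ∧ ct σB = (n-1)/2 then 0
        else if ct σA ≤ ct σB then 1 else -1) := by
  unfold tau
  by_cases h1 : ct σA = 0 ∧ ct σB = 0
  · rw [if_pos h1, if_pos ((glue_false_iff _ _ _).mpr
      ⟨(ct_false_iff σA).mp h1.1, (ct_false_iff σB).mp h1.2⟩)]
  · rw [if_neg h1, if_neg (fun hc => h1 ⟨(ct_false_iff σA).mpr ((glue_false_iff _ _ _).mp hc).1,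
      (ct_false_iff σB).mpr ((glue_false_iff _ _ _).mp hc).2⟩)]
    by_cases h2 : ct σA = (n-1)/2 + 1 ∧ ct σB = (n-1)/2
    · rw [if_pos h2, if_pos ((glue_true_iff _ _ _).mpr
        ⟨(ct_true_iff σA).mp (by rw [cardA hodd hn]; exact h2.1),
         (ct_true_iff σB).mp (by rw [cardB hodd hn]; exact h2.2)⟩)]
    · rw [if_neg h2, if_neg (fun hc => h2
        ⟨by rw [← cardA hodd hn]; exact (ct_true_iff σA).mpr ((glue_true_iff _ _ _).mp hc).1,
         by rw [← cardB hodd hn]; exact (ct_true_iff σB).mpr ((glue_true_iff _ _ _).mp hc).2⟩)]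
      rw [dInt_glue]
      by_cases h3 : ct σA ≤ ct σB
      · rw [if_pos h3, if_pos (by omega)]
      · rw [if_neg h3, if_neg (by omega)]

/-! ### the weighted tau sum -/

lemma sum_tau {n : ℕ} (hodd : Odd n) (hn : 5 ≤ n) (p : ℝ) :
    ∑ s : Fin n → Bool, (∏ i, if s i then p else 1 - p) * tau s =
      (1 - 2*p) * binomCollision ((n-1)/2) p + p^n - (1-p)^n := by
  classical
  set q : ℝ := 1 - p with hq
  set h : ℕ := (n-1)/2 with hh
  have hn2 : n = 2*h + 1 := by
    obtain ⟨m, hm⟩ := hodd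
    rw [hh]
    omega
  -- reindex over the product of subcubes
  have hre : ∑ s : Fin n → Bool, (∏ i, if s i then p else 1 - p) * tau s =
      ∑ w : ({i : Fin n // eVec n i = true} → Bool) ×
          ({i : Fin n // ¬ eVec n i = true} → Bool),
        (∏ i, if glue (eVec n) w.1 w.2 i then p else 1 - p) *
          tau (glue (eVec n) w.1 w.2) := by
    rw [← Equiv.sum_comp (Equiv.piEquivPiSubtypeProd
      (fun i : Fin n => eVec n i = true) (fun _ => Bool)).symm
      (fun s => (∏ i, if s i then p else 1 - p) * tau s)]
    rfl
  have hre2 : (∑ w : ({i : Fin n // eVec n i = true} → Bool) ×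
          ({i : Fin n // ¬ eVec n i = true} → Bool),
        (∏ i, if glue (eVec n) w.1 w.2 i then p else 1 - p) *
          tau (glue (eVec n) w.1 w.2)) =
      ∑ σA : {i : Fin n // eVec n i = true} → Bool,
        ∑ σB : {i : Fin n // ¬ eVec n i = true} → Bool,
        (∏ i, if glue (eVec n) σA σB i then p else 1 - p) *
          tau (glue (eVec n) σA σB) :=
    Fintype.sum_prod_type _
  rw [hre, hre2]
  have hptw : ∀ (σA : {i : Fin n // eVec n i = true} → Bool)
      (σB : {i : Fin n // ¬ eVec n i = true} → Bool),
      (∏ i, if glue (eVec n) σA σB i then p else 1 - p) * tau (glue (eVec n) σA σB) =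
      (∏ i : {i : Fin n // eVec n i = true}, if σA i then p else q) *
        ((∏ i : {i : Fin n // ¬ eVec n i = true}, if σB i then p else q) *
          (if ct σA = 0 ∧ ct σB = 0 then (0:ℝ)
            else if ct σA = h + 1 ∧ ct σB = h then 0
            else if ct σA ≤ ct σB then 1 else -1)) := by
    intro σA σB
    have ht := tau_glue hodd hn σA σB
    rw [← hh] at ht
    rw [weight_glue p σA σB, ht, hq]
    ring
  have hinner : ∀ σA : {i : Fin n // eVec n i = true} → Bool,
      (∑ σB : {i : Fin n // ¬ eVec n i = true} → Bool,
        ((∏ i : {i : Fin n // ¬ eVec n i = true}, if σB i then p else q) *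
          (if ct σA = 0 ∧ ct σB = 0 then (0:ℝ)
            else if ct σA = h + 1 ∧ ct σB = h then 0
            else if ct σA ≤ ct σB then 1 else -1))) =
      ∑ b ∈ range (h+1), ((h.choose b : ℝ)) *
        (p^b * q^(h-b) * (if ct σA = 0 ∧ b = 0 then (0:ℝ)
          else if ct σA = h + 1 ∧ b = h then 0
          else if ct σA ≤ b then 1 else -1)) := by
    intro σA
    have := cube_sum (α := {i : Fin n // ¬ eVec n i = true}) p q
      (fun b => (if ct σA = 0 ∧ b = 0 then (0:ℝ)
        else if ct σA = h + 1 ∧ b = h then 0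
        else if ct σA ≤ b then 1 else -1))
    rw [cardB hodd hn, ← hh] at this
    exact this
  have hstep3 : (∑ σA : {i : Fin n // eVec n i = true} → Bool,
      ∑ σB : {i : Fin n // ¬ eVec n i = true} → Bool,
        (∏ i, if glue (eVec n) σA σB i then p else 1 - p) *
          tau (glue (eVec n) σA σB)) =
      ∑ σA : {i : Fin n // eVec n i = true} → Bool,
        (∏ i : {i : Fin n // eVec n i = true}, if σA i then p else q) *
        (∑ b ∈ range (h+1), ((h.choose b : ℝ)) *
          (p^b * q^(h-b) * (if ct σA = 0 ∧ b = 0 then (0:ℝ)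
            else if ct σA = h + 1 ∧ b = h then 0
            else if ct σA ≤ b then 1 else -1))) :=
    Finset.sum_congr rfl fun σA _ => by
      rw [Finset.sum_congr rfl fun σB _ => hptw σA σB, ← Finset.mul_sum, hinner σA]
  rw [hstep3]
  have hstep4 : (∑ σA : {i : Fin n // eVec n i = true} → Bool,
      (∏ i : {i : Fin n // eVec n i = true}, if σA i then p else q) *
        (∑ b ∈ range (h+1), ((h.choose b : ℝ)) *
          (p^b * q^(h-b) * (if ct σA = 0 ∧ b = 0 then (0:ℝ)
            else if ct σA = h + 1 ∧ b = h then 0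
            else if ct σA ≤ b then 1 else -1)))) =
      ∑ a ∈ range (h+2), ((h+1).choose a : ℝ) *
        (p^a * q^(h+1-a) * (∑ b ∈ range (h+1), ((h.choose b : ℝ)) *
          (p^b * q^(h-b) * (if a = 0 ∧ b = 0 then (0:ℝ)
            else if a = h + 1 ∧ b = h then 0
            else if a ≤ b then 1 else -1)))) := by
    have := cube_sum (α := {i : Fin n // eVec n i = true}) p q
      (fun a => ∑ b ∈ range (h+1), ((h.choose b : ℝ)) *
        (p^b * q^(h-b) * (if a = 0 ∧ b = 0 then (0:ℝ)
          else if a = h + 1 ∧ b = h then 0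
          else if a ≤ b then 1 else -1)))
    rw [cardA hodd hn, ← hh] at this
    exact this
  rw [hstep4]
  have hstep5 : (∑ a ∈ range (h+2), ((h+1).choose a : ℝ) *
      (p^a * q^(h+1-a) * (∑ b ∈ range (h+1), ((h.choose b : ℝ)) *
        (p^b * q^(h-b) * (if a = 0 ∧ b = 0 then (0:ℝ)
          else if a = h + 1 ∧ b = h then 0
          else if a ≤ b then 1 else -1))))) =
      ∑ a ∈ range (h+2), (((h+1).choose a : ℝ) * p^a * q^(h+1-a)) *
        (∑ b ∈ range (h+1), ((h.choose b : ℝ) * p^b * q^(h-b)) *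
          (if a = 0 ∧ b = 0 then (0:ℝ) else if a = h+1 ∧ b = h then 0 else
            if a ≤ b then 1 else -1)) :=
    Finset.sum_congr rfl fun a _ => by
      rw [show (∑ b ∈ range (h+1), ((h.choose b : ℝ)) *
        (p^b * q^(h-b) * (if a = 0 ∧ b = 0 then (0:ℝ)
          else if a = h + 1 ∧ b = h then 0
          else if a ≤ b then 1 else -1))) =
        ∑ b ∈ range (h+1), ((h.choose b : ℝ) * p^b * q^(h-b)) *
          (if a = 0 ∧ b = 0 then (0:ℝ) else if a = h+1 ∧ b = h then 0 else
            if a ≤ b then 1 else -1) from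
        Finset.sum_congr rfl fun b _ => by ring]
      ring
  rw [hstep5, range_eval h p q]
  have hcoll : binomCollision h p =
      ∑ b ∈ range (h+1), ((h.choose b : ℝ) * p^b * q^(h-b))^2 := by
    unfold binomCollision binomPMF
    rfl
  rw [hcoll, hn2]
  have hqp : q - p = 1 - 2*p := by rw [hq]; ring
  rw [hqp]

/-! ### positivity of the main expression -/

lemma peel3 (m : ℕ) (f : ℕ → ℝ) :
    ∑ j ∈ range (m+3), f j = f 0 + f 1 + (∑ j ∈ range m, f (j+2)) + f (m+2) := by
  rw [show m+3 = (m+2)+1 by omega, Finset.sum_range_succ]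
  have h1 : ∑ j ∈ range (m+2), f j = f 0 + f 1 + ∑ j ∈ range m, f (j+2) := by
    rw [show m+2 = (m+1)+1 by omega, Finset.sum_range_succ' f (m+1),
      Finset.sum_range_succ' (fun j => f (j+1)) m]
    have h2 : ∀ j ∈ range m, f (j+1+1) = f (j+2) := fun j _ => by norm_num
    rw [Finset.sum_congr rfl h2]
    norm_num
    ring
  rw [h1]

lemma main_pos {n : ℕ} (hodd : Odd n) (hn : 5 ≤ n) {p : ℝ}
    (hp0 : 4 / (((n : ℝ) - 3) ^ 2 + 6) < p) (hp1 : p < 1 / 2) :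
    0 < (1 - 2*p) * binomCollision ((n-1)/2) p + p^n - (1-p)^n := by
  have hh2 : 2 ≤ (n-1)/2 := by omega
  obtain ⟨g, hg⟩ : ∃ g, (n-1)/2 = g + 2 := ⟨(n-1)/2 - 2, by omega⟩
  have hn2 : n = 2*g + 5 := by obtain ⟨m, hm⟩ := hodd; omega
  set q : ℝ := 1 - p with hq
  have hD : (0:ℝ) < ((n:ℝ) - 3)^2 + 6 := by positivity
  have hp_pos : 0 < p := lt_trans (by positivity) hp0
  have hq_pos : 0 < q := by rw [hq]; linarith
  have hpq : p < q := by rw [hq]; linarith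
  have h2p : 0 < 1 - 2*p := by linarith
  have hH : ((n:ℝ)) = 2*(g:ℝ) + 5 := by rw [hn2]; push_cast; ring
  have hkey : ((g:ℝ)^2 + 2*(g:ℝ) + 3) * p > 1 := by
    rw [div_lt_iff₀ hD] at hp0
    have hG2 : ((n:ℝ) - 3)^2 + 6 = 4*(g:ℝ)^2 + 8*(g:ℝ) + 10 := by rw [hH]; ring
    rw [hG2] at hp0
    nlinarith [hp_pos]
  -- the collision sum lower bound
  have hcoll : binomCollision ((n-1)/2) p =
      ∑ b ∈ range ((n-1)/2+1), ((((n-1)/2).choose b : ℝ) * p^b * q^((n-1)/2-b))^2 := by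
    rw [hq]
    unfold binomCollision binomPMF
    rfl
  have hc_lb : q^(2*g+4) + (((g:ℝ)+2)*p*q^(g+1))^2 + p^(2*g+4) ≤
      binomCollision ((n-1)/2) p := by
    rw [hcoll]
    have hsub : ({0, 1, (n-1)/2} : Finset ℕ) ⊆ range ((n-1)/2+1) := by
      intro x hx
      rw [Finset.mem_insert, Finset.mem_insert, Finset.mem_singleton] at hx
      rw [Finset.mem_range]
      omega
    have hsum3 : ∑ b ∈ ({0, 1, (n-1)/2} : Finset ℕ),
        ((((n-1)/2).choose b : ℝ) * p^b * q^((n-1)/2-b))^2 =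
        q^(2*g+4) + (((g:ℝ)+2)*p*q^(g+1))^2 + p^(2*g+4) := by
      rw [Finset.sum_insert (by
        rw [Finset.mem_insert, Finset.mem_singleton]; omega)]
      rw [Finset.sum_insert (by rw [Finset.mem_singleton]; omega)]
      rw [Finset.sum_singleton]
      have e0 : ((((n-1)/2).choose 0 : ℝ) * p^0 * q^((n-1)/2-0))^2 = q^(2*g+4) := by
        rw [Nat.choose_zero_right, show (n-1)/2 - 0 = g + 2 by omega]
        push_cast
        ring
      have e1 : ((((n-1)/2).choose 1 : ℝ) * p^1 * q^((n-1)/2-1))^2 =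
          (((g:ℝ)+2)*p*q^(g+1))^2 := by
        rw [Nat.choose_one_right, show (n-1)/2 - 1 = g + 1 by omega, hg]
        push_cast
        ring
      have eh : ((((n-1)/2).choose ((n-1)/2) : ℝ) * p^((n-1)/2) * q^((n-1)/2-(n-1)/2))^2 =
          p^(2*g+4) := by
        rw [Nat.choose_self, Nat.sub_self, hg]
        push_cast
        ring
      rw [e0, e1, eh]
      ring
    rw [← hsum3]
    exact Finset.sum_le_sum_of_subset_of_nonneg hsub fun i _ _ => sq_nonneg _
  -- the geometric sum upper bound
  have hrefl : (∑ i ∈ range n, q^i * p^(n-1-i)) = ∑ j ∈ range n, p^j * q^(n-1-j) := by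
    rw [← Finset.sum_range_reflect (fun j => p^j * q^(n-1-j)) n]
    refine Finset.sum_congr rfl fun i hi => ?_
    rw [Finset.mem_range] at hi
    rw [show n - 1 - (n - 1 - i) = i by omega]
    ring
  have hG_ub : (∑ j ∈ range n, p^j * q^(n-1-j)) <
      q^(2*g+4) + (((g:ℝ)+2)*p*q^(g+1))^2 + p^(2*g+4) := by
    have hconv : (∑ j ∈ range n, p^j * q^(n-1-j)) =
        ∑ j ∈ range ((2*g+2)+3), p^j * q^(2*g+4-j) := by
      rw [hn2, show 2*g+5 = (2*g+2)+3 by omega]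
      exact Finset.sum_congr rfl fun j hj => by
        rw [show (2*g+2)+3-1-j = 2*g+4-j by omega]
    rw [hconv, peel3 (2*g+2) (fun j => p^j * q^(2*g+4-j))]
    have hf0 : p^0 * q^(2*g+4-0) = q^(2*g+4) := by norm_num
    have hf1 : p^1 * q^(2*g+4-1) = p * q^(2*g+3) := by
      rw [show 2*g+4-1 = 2*g+3 by omega]
      ring
    have hfl : p^((2*g+2)+2) * q^(2*g+4-((2*g+2)+2)) = p^(2*g+4) := by
      rw [show 2*g+4-((2*g+2)+2) = 0 by omega, show (2*g+2)+2 = 2*g+4 by omega]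
      ring
    rw [hf0, hf1, hfl]
    have hmid : ∑ j ∈ range (2*g+2), p^(j+2) * q^(2*g+4-(j+2)) ≤
        (2*(g:ℝ)+2) * (p^2 * q^(2*g+2)) := by
      have hbound : ∀ j ∈ range (2*g+2), p^(j+2) * q^(2*g+4-(j+2)) ≤ p^2 * q^(2*g+2) := by
        intro j hj
        rw [Finset.mem_range] at hj
        rw [show 2*g+4-(j+2) = 2*g+2-j by omega]
        have h2 : p^j ≤ q^j := pow_le_pow_left₀ (le_of_lt hp_pos) (le_of_lt hpq) j
        have h3 : q^j * q^(2*g+2-j) = q^(2*g+2) := by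
          rw [← pow_add]
          congr 1
          omega
        calc p^(j+2) * q^(2*g+2-j) = (p^j * q^(2*g+2-j)) * p^2 := by ring
          _ ≤ (q^j * q^(2*g+2-j)) * p^2 :=
              mul_le_mul_of_nonneg_right
                (mul_le_mul_of_nonneg_right h2 (by positivity : (0:ℝ) ≤ q^(2*g+2-j)))
                (by positivity : (0:ℝ) ≤ p^2)
          _ = p^2 * q^(2*g+2) := by rw [h3]; ring
      have hcard := Finset.sum_le_card_nsmul (range (2*g+2)) _ _ hbound
      rw [Finset.card_range, nsmul_eq_mul] at hcard
      calc ∑ j ∈ range (2*g+2), p^(j+2) * q^(2*g+4-(j+2)) ≤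
            ((2*g+2 : ℕ) : ℝ) * (p^2 * q^(2*g+2)) := hcard
        _ = (2*(g:ℝ)+2) * (p^2 * q^(2*g+2)) := by push_cast; ring
    have hstrict : p * q^(2*g+3) + (2*(g:ℝ)+2) * (p^2 * q^(2*g+2)) <
        (((g:ℝ)+2)*p*q^(g+1))^2 := by
      have hlin : q + (2*(g:ℝ)+2)*p < ((g:ℝ)+2)^2 * p := by nlinarith [hkey]
      have hfac : 0 < p * q^(2*g+2) := by positivity
      have hmul := mul_lt_mul_of_pos_right hlin hfac
      calc p * q^(2*g+3) + (2*(g:ℝ)+2) * (p^2 * q^(2*g+2))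
          = (q + (2*(g:ℝ)+2)*p) * (p * q^(2*g+2)) := by ring
        _ < (((g:ℝ)+2)^2 * p) * (p * q^(2*g+2)) := hmul
        _ = (((g:ℝ)+2)*p*q^(g+1))^2 := by ring
    linarith [hmid, hstrict]
  -- assemble
  have hgeom := geom_sum₂_mul q p n
  have hqp : q - p = 1 - 2*p := by rw [hq]; ring
  have hCG : (∑ i ∈ range n, q^i * p^(n-1-i)) < binomCollision ((n-1)/2) p := by
    rw [hrefl]
    exact lt_of_lt_of_le hG_ub hc_lb
  have hgeom2 : q^n - p^n = (1 - 2*p) * (∑ i ∈ range n, q^i * p^(n-1-i)) := by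
    rw [← hqp, ← hgeom]
    ring
  have hposprod := mul_pos h2p (sub_pos.mpr hCG)
  nlinarith [hposprod, hgeom2]

/-! ### the main theorem -/

theorem stmt1 (n : ℕ) (hodd : Odd n) (hn : 5 ≤ n)
    (p : ℝ) (hp0 : 4 / (((n : ℝ) - 3) ^ 2 + 6) < p) (hp1 : p < 1 / 2) :
    phi n p (maj n) < phi n p (gfun n) := by
  have key : phi n p (gfun n) - phi n p (maj n) =
      (4 / 2^n) * ((1 - 2*p) * binomCollision ((n-1)/2) p + p^n - (1-p)^n) := by
    rw [phi_eq_innerPhi n p (gfun n), phi_eq_innerPhi n p (maj n), ← Finset.sum_sub_distrib]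
    have hpt : ∀ s : Fin n → Bool,
        (∏ i, if s i then p else 1 - p) * innerPhi n (gfun n) s -
        (∏ i, if s i then p else 1 - p) * innerPhi n (maj n) s =
        (4 / 2^n) * ((∏ i, if s i then p else 1 - p) * tau s) := by
      intro s
      rw [← mul_sub, innerPhi_diff hodd hn s]
      ring
    rw [Finset.sum_congr rfl fun s _ => hpt s, ← Finset.mul_sum, sum_tau hodd hn p]
  have hpos : (0:ℝ) < 4 / 2^n := by positivity
  have hmain := main_pos hodd hn hp0 hp1
  have := mul_pos hpos hmain
  linarith [key, this]
end

section
/- For all odd n ≥ 3 and all q ∈ (0,1), setting ρ = 1 - 2q, it holds that 2^{n-3}·(Stab_ρ(Maj_n) - Stab_ρ(g_n)) = (1-2q)·Pr[z = z'] + q^n - (1-q)^n, where z and z' are independent Binomial((n-1)/2, q) random variables. -/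
open Finset

lemma pascalPMF (m : ℕ) (p : ℝ) (k : ℕ) :
    binomPMF (m+1) p (k+1) = p * binomPMF m p k + (1-p) * binomPMF m p (k+1) := by
  unfold binomPMF
  rw [Nat.choose_succ_succ]
  push_cast
  rcases lt_trichotomy k m with h | h | h
  · have h1 : m - k = (m - (k+1)) + 1 := by omega
    rw [h1, pow_succ]
    ring
  · subst h
    simp [Nat.choose_succ_self, pow_succ]
    ring
  · have h1 : m.choose (k+1) = 0 := Nat.choose_eq_zero_of_lt (by omega)
    have h2 : m.choose k = 0 := Nat.choose_eq_zero_of_lt (by omega)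
    simp [h1, h2]

lemma pmfZero (m : ℕ) (p : ℝ) : binomPMF (m+1) p 0 = (1-p) * binomPMF m p 0 := by
  simp [binomPMF, pow_succ]; ring

lemma pmfTop (m : ℕ) (p : ℝ) : binomPMF m p (m+1) = 0 := by
  simp [binomPMF, Nat.choose_eq_zero_of_lt]

def cnt {m : ℕ} (u : Fin m → Bool) : ℕ := ∑ i, if u i then 1 else 0

lemma cubeSum (m : ℕ) (p : ℝ) (φ : ℕ → ℝ) :
    ∑ u : Fin m → Bool, (∏ i, if u i then p else 1 - p) * φ (cnt u)
    = ∑ k ∈ range (m+1), binomPMF m p k * φ k := by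
  induction m generalizing φ with
  | zero =>
    have : ∀ u : Fin 0 → Bool, cnt u = 0 := fun u => by simp [cnt]
    simp [this, cnt, binomPMF]
  | succ m ih =>
    have key : ∑ u : Fin (m+1) → Bool, (∏ i, if u i then p else 1 - p) * φ (cnt u)
        = ∑ y : Bool × (Fin m → Bool),
            (∏ i, if (Fin.cons y.1 y.2 : Fin (m+1) → Bool) i then p else 1 - p) * φ (cnt ((Fin.cons y.1 y.2 : Fin (m+1) → Bool))) := by
      apply Fintype.sum_bijective (fun y : Bool × (Fin m → Bool) => (Fin.cons y.1 y.2 : Fin (m+1) → Bool))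
        ?_ _ _ (fun y => rfl) |>.symm
      constructor
      · intro a b hab
        have h0 := congrFun hab 0
        have hs : ∀ i : Fin m, a.2 i = b.2 i := fun i => by
          have := congrFun hab i.succ; simpa using this
        exact Prod.ext (by simpa using h0) (funext hs)
      · intro x; exact ⟨(x 0, fun i => x i.succ), by
          funext i; exact Fin.cases rfl (fun j => by simp) i⟩
    rw [key, Fintype.sum_prod_type, Fintype.sum_bool]
    have hprod : ∀ (b : Bool) (v : Fin m → Bool),
        (∏ i, if (Fin.cons b v : Fin (m+1) → Bool) i then p else 1 - p)
          = (if b then p else 1 - p) * ∏ i, if v i then p else 1 - p := by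
      intro b v; rw [Fin.prod_univ_succ]; simp
    have hcnt : ∀ (b : Bool) (v : Fin m → Bool),
        cnt (Fin.cons b v : Fin (m+1) → Bool) = (if b then 1 else 0) + cnt v := by
      intro b v; unfold cnt; rw [Fin.sum_univ_succ]; simp
    simp only [hprod, hcnt]
    norm_num
    have e1 : ∑ u : Fin m → Bool, (∏ i, if u i then p else 1 - p) * φ (1 + cnt u)
        = ∑ k ∈ range (m+1), binomPMF m p k * φ (1+k) := ih (fun k => φ (1+k))
    have e0 : ∑ u : Fin m → Bool, (∏ i, if u i then p else 1 - p) * φ (cnt u)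
        = ∑ k ∈ range (m+1), binomPMF m p k * φ k := ih φ
    have g1 : ∑ v : Fin m → Bool, (p * ∏ i, if v i then p else 1 - p) * φ (1 + cnt v)
        = p * ∑ u : Fin m → Bool, (∏ i, if u i then p else 1 - p) * φ (1 + cnt u) := by
      rw [Finset.mul_sum]; exact Finset.sum_congr rfl fun v _ => by ring
    have g2 : ∑ v : Fin m → Bool, ((1-p) * ∏ i, if v i then p else 1 - p) * φ (cnt v)
        = (1-p) * ∑ u : Fin m → Bool, (∏ i, if u i then p else 1 - p) * φ (cnt u) := by
      rw [Finset.mul_sum]; exact Finset.sum_congr rfl fun v _ => by ring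
    rw [g1, g2, e1, e0]
    rw [Finset.sum_range_succ' (fun k => binomPMF (m+1) p k * φ k)]
    simp only [pascalPMF, pmfZero]
    have h3 : ∑ k ∈ range (m+1), (p * binomPMF m p k + (1-p) * binomPMF m p (k+1)) * φ (k+1)
        = p * ∑ k ∈ range (m+1), binomPMF m p k * φ (1+k)
          + (1-p) * ∑ k ∈ range (m+1), binomPMF m p (k+1) * φ (k+1) := by
      rw [Finset.mul_sum, Finset.mul_sum, ← Finset.sum_add_distrib]
      refine Finset.sum_congr rfl fun k _ => ?_
      rw [Nat.add_comm 1 k]; ring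
    rw [h3]
    have h4 : ∑ k ∈ range (m+1), binomPMF m p (k+1) * φ (k+1)
        = ∑ k ∈ range (m+1), binomPMF m p k * φ k - binomPMF m p 0 * φ 0 := by
      have := Finset.sum_range_succ' (fun k => binomPMF m p k * φ k) (m+1)
      rw [Finset.sum_range_succ] at this
      rw [pmfTop] at this
      simp at this
      linarith [this]
    rw [h4]
    ring

lemma pmfSymm (m : ℕ) (p : ℝ) (k : ℕ) (hk : k ≤ m) :
    binomPMF m (1-p) (m-k) = binomPMF m p k := by
  unfold binomPMF
  rw [Nat.choose_symm hk, show m - (m-k) = k by omega, show (1:ℝ)-(1-p) = p by ring]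
  ring

lemma binomAlg (h : ℕ) (q : ℝ) :
    ∑ a ∈ range (h+2), binomPMF (h+1) q a *
      (∑ t ∈ range (h+1), binomPMF h q t * (if a ≤ t then (1:ℝ) else -1))
    = (1-2*q) * binomCollision h q := by
  set P : ℕ → ℝ := binomPMF h q with hP
  set C : ℝ := binomCollision h q with hC
  set inLe : ℕ → ℝ := fun a => ∑ t ∈ range (h+1), P t * (if a ≤ t then 1 else -1) with hinLe
  set inLt : ℕ → ℝ := fun a => ∑ t ∈ range (h+1), P t * (if a < t then 1 else -1) with hinLt
  set W0 : ℝ := ∑ a ∈ range (h+1), P a * inLe a with hW0def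
  set X : ℝ := ∑ a ∈ range (h+1), P a * inLt a with hXdef
  have key2 : W0 - X = 2 * C := by
    rw [hW0def, hXdef, ← Finset.sum_sub_distrib]
    have hterm : ∀ a ∈ range (h+1), P a * inLe a - P a * inLt a = P a * (2 * P a) := by
      intro a ha
      have hd : inLe a - inLt a = 2 * P a := by
        show (∑ t ∈ range (h+1), P t * (if a ≤ t then (1:ℝ) else -1))
          - (∑ t ∈ range (h+1), P t * (if a < t then (1:ℝ) else -1)) = 2 * P a
        rw [← Finset.sum_sub_distrib]
        have hpt : ∀ t ∈ range (h+1), P t * (if a ≤ t then (1:ℝ) else -1)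
            - P t * (if a < t then 1 else -1) = if a = t then 2 * P t else 0 := by
          intro t _
          rcases lt_trichotomy a t with h' | h' | h'
          · rw [if_pos h'.le, if_pos h', if_neg (by omega)]; ring
          · subst h'; rw [if_pos le_rfl, if_neg (lt_irrefl a), if_pos rfl]; ring
          · rw [if_neg (by omega), if_neg (by omega), if_neg (by omega)]; ring
        rw [Finset.sum_congr rfl hpt, Finset.sum_ite_eq, if_pos ha]
      calc P a * inLe a - P a * inLt a = P a * (inLe a - inLt a) := by ring
        _ = P a * (2 * P a) := by rw [hd]
    rw [Finset.sum_congr rfl hterm, hC, binomCollision, Finset.mul_sum]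
    exact Finset.sum_congr rfl fun a _ => by rw [hP]; ring
  have key3 : W0 + X = 0 := by
    have hsplit : W0 + X = ∑ a ∈ range (h+1), ∑ t ∈ range (h+1),
        P a * P t * ((if a ≤ t then (1:ℝ) else -1) + (if a < t then 1 else -1)) := by
      rw [hW0def, hXdef, ← Finset.sum_add_distrib]
      refine Finset.sum_congr rfl fun a _ => ?_
      show P a * inLe a + P a * inLt a = _
      have h1 : inLe a = ∑ t ∈ range (h+1), P t * (if a ≤ t then (1:ℝ) else -1) := rfl
      have h2 : inLt a = ∑ t ∈ range (h+1), P t * (if a < t then (1:ℝ) else -1) := rfl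
      rw [h1, h2, Finset.mul_sum, Finset.mul_sum, ← Finset.sum_add_distrib]
      exact Finset.sum_congr rfl fun t _ => by ring
    have hanti : ∀ a t : ℕ, P a * P t * ((if a ≤ t then (1:ℝ) else -1) + (if a < t then 1 else -1))
        = -(P t * P a * ((if t ≤ a then (1:ℝ) else -1) + (if t < a then 1 else -1))) := by
      intro a t
      rcases lt_trichotomy a t with h' | h' | h'
      · rw [if_pos h'.le, if_pos h', if_neg (by omega), if_neg (by omega)]; ring
      · subst h'
        rw [if_pos le_rfl, if_neg (lt_irrefl a)]; ring
      · rw [if_neg (by omega), if_neg (by omega), if_pos h'.le, if_pos h']; ring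
    have hsym : ∑ a ∈ range (h+1), ∑ t ∈ range (h+1),
        P a * P t * ((if a ≤ t then (1:ℝ) else -1) + (if a < t then 1 else -1))
        = -(∑ a ∈ range (h+1), ∑ t ∈ range (h+1),
        P a * P t * ((if a ≤ t then (1:ℝ) else -1) + (if a < t then 1 else -1))) := by
      conv_lhs => rw [Finset.sum_comm]
      rw [← Finset.sum_neg_distrib]
      refine Finset.sum_congr rfl fun t _ => ?_
      rw [← Finset.sum_neg_distrib]
      exact Finset.sum_congr rfl fun a _ => hanti a t
    rw [hsplit]
    linarith [hsym, hsplit]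
  have hW : W0 = C := by linarith
  have hX : X = -C := by linarith
  have hPtop : P (h+1) = 0 := pmfTop h q
  show ∑ a ∈ range (h+2), binomPMF (h+1) q a * inLe a = (1-2*q) * C
  rw [Finset.sum_range_succ' (fun a => binomPMF (h+1) q a * inLe a) (h+1)]
  have hLeLt : ∀ a : ℕ, inLe (a+1) = inLt a := by
    intro a
    show (∑ t ∈ range (h+1), P t * (if a+1 ≤ t then (1:ℝ) else -1))
      = ∑ t ∈ range (h+1), P t * (if a < t then (1:ℝ) else -1)
    refine Finset.sum_congr rfl fun t _ => ?_
    simp only [Nat.add_one_le_iff]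
  have hgshift : ∑ a ∈ range (h+1), P (a+1) * inLe (a+1) = W0 - P 0 * inLe 0 := by
    have h5 := Finset.sum_range_succ' (fun a => P a * inLe a) (h+1)
    rw [Finset.sum_range_succ] at h5
    rw [hPtop] at h5
    simp only [zero_mul, add_zero] at h5
    rw [hW0def]
    linarith [h5]
  have hmain : ∑ a ∈ range (h+1), binomPMF (h+1) q (a+1) * inLe (a+1)
      = q * X + (1-q) * (∑ a ∈ range (h+1), P (a+1) * inLe (a+1)) := by
    rw [hXdef, Finset.mul_sum, Finset.mul_sum, ← Finset.sum_add_distrib]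
    refine Finset.sum_congr rfl fun a _ => ?_
    rw [pascalPMF, ← hP, hLeLt a]
    ring
  rw [hmain, hgshift, pmfZero, ← hP, hW, hX]
  ring


lemma cnt_le {n : ℕ} (x : Fin n → Bool) : cnt x ≤ n := by
  unfold cnt
  calc ∑ i, (if x i then 1 else 0) ≤ ∑ _i : Fin n, 1 :=
        Finset.sum_le_sum fun i _ => by split_ifs <;> omega
    _ = n := by simp

lemma chiSum (n : ℕ) (x : Fin n → Bool) : ∑ i, chi (x i) = 2 * (cnt x : ℝ) - n := by
  have hterm : ∀ b : Bool, chi b = 2 * (if b then (1:ℝ) else 0) - 1 := by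
    intro b; cases b <;> norm_num [chi]
  have hcast : ((cnt x : ℕ) : ℝ) = ∑ i, if x i then (1:ℝ) else 0 := by
    unfold cnt; push_cast; rfl
  calc ∑ i, chi (x i) = ∑ i, (2 * (if x i then (1:ℝ) else 0) - 1) :=
        Finset.sum_congr rfl fun i _ => hterm (x i)
    _ = 2 * (∑ i, if x i then (1:ℝ) else 0) - n := by
        rw [Finset.sum_sub_distrib, ← Finset.mul_sum]; simp
    _ = 2 * (cnt x : ℝ) - n := by rw [hcast]

lemma majEq {n : ℕ} (hodd : Odd n) (x : Fin n → Bool) :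
    maj n x = if n ≤ 2 * cnt x then 1 else -1 := by
  obtain ⟨k, hk⟩ := hodd
  rw [maj, chiSum]
  by_cases hle : n ≤ 2 * cnt x
  · rw [if_pos hle]
    apply Real.sign_of_pos
    have : n + 1 ≤ 2 * cnt x := by omega
    have h2 : (n:ℝ) + 1 ≤ 2 * (cnt x : ℝ) := by exact_mod_cast this
    linarith
  · rw [if_neg hle]
    apply Real.sign_of_neg
    have : 2 * cnt x + 1 ≤ n := by omega
    have h2 : 2 * (cnt x : ℝ) + 1 ≤ (n:ℝ) := by exact_mod_cast this
    linarith

lemma cnt_not {n : ℕ} (x : Fin n → Bool) : cnt (fun i => !(x i)) + cnt x = n := by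
  unfold cnt
  rw [← Finset.sum_add_distrib]
  have : ∀ i : Fin n, ((if !(x i) then 1 else 0) + if x i then 1 else 0) = 1 := by
    intro i; cases hx : x i <;> simp
  rw [Finset.sum_congr rfl fun i _ => this i]
  simp

lemma majNot {n : ℕ} (hodd : Odd n) (x : Fin n → Bool) :
    maj n (fun i => !(x i)) = - maj n x := by
  obtain ⟨k, hk⟩ := hodd
  have hcn := cnt_not x
  rw [majEq ⟨k, hk⟩, majEq ⟨k, hk⟩]
  split_ifs with h1 h2 h2
  · omega
  · norm_num
  · norm_num
  · omega

lemma cntE (h : ℕ) : cnt (eVec (2*h+1)) = h + 1 := by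
  unfold cnt eVec
  have hidx : (2*h+1-1)/2 + 1 = h+1 := by omega
  have hterm : ∀ i : Fin (2*h+1),
      (if (decide ((i:ℕ) < (2*h+1-1)/2+1) : Bool) then 1 else 0) = if (i:ℕ) < h+1 then 1 else 0 := by
    intro i; rw [hidx]; simp
  rw [Finset.sum_congr rfl fun i _ => hterm i]
  rw [Fin.sum_univ_eq_sum_range (fun i => if i < h+1 then 1 else 0) (2*h+1)]
  rw [Finset.range_eq_Ico, ← Finset.sum_Ico_consecutive _ (Nat.zero_le (h+1)) (by omega : h+1 ≤ 2*h+1)]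
  have e1 : ∑ i ∈ Finset.Ico 0 (h+1), (if i < h+1 then 1 else 0) = h+1 := by
    rw [Finset.sum_congr rfl fun i hi => if_pos (Finset.mem_Ico.mp hi).2]
    simp
  have e2 : ∑ i ∈ Finset.Ico (h+1) (2*h+1), (if i < h+1 then 1 else 0) = 0 := by
    rw [Finset.sum_congr rfl fun i hi => if_neg (by have := (Finset.mem_Ico.mp hi).1; omega)]
    simp
  omega

lemma majE (h : ℕ) : maj (2*h+1) (eVec (2*h+1)) = 1 := by
  rw [majEq ⟨h, by ring⟩, cntE, if_pos (by omega)]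

lemma majEbar (h : ℕ) : maj (2*h+1) (fun i => !(eVec (2*h+1) i)) = -1 := by
  rw [majNot ⟨h, by ring⟩, majE]

lemma Vval (h : ℕ) (q : ℝ) :
    ∑ x : Fin (2*h+1) → Bool, (∏ i, if xor (x i) (eVec (2*h+1) i) then q else 1 - q) * maj (2*h+1) x
    = (1 - 2*q) * binomCollision h q := by
  have hodd : Odd (2*h+1) := ⟨h, by ring⟩
  set q1 : Fin (h+1) ⊕ Fin h ≃ Fin (2*h+1) :=
    finSumFinEquiv.trans (finCongr (by omega : h+1+h = 2*h+1)) with hq1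
  set Φ : ((Fin (h+1) → Bool) × (Fin h → Bool)) → (Fin (2*h+1) → Bool) :=
    fun p i => Sum.elim p.1 p.2 (q1.symm i) with hΦ
  have hΦl : ∀ p a, Φ p (q1 (Sum.inl a)) = p.1 a := by
    intro p a; rw [hΦ]; simp
  have hΦr : ∀ p b, Φ p (q1 (Sum.inr b)) = p.2 b := by
    intro p b; rw [hΦ]; simp
  have hΦbij : Function.Bijective Φ := by
    constructor
    · intro p p' hpp
      have h1 : p.1 = p'.1 := funext fun a => by
        have := congrFun hpp (q1 (Sum.inl a)); rwa [hΦl, hΦl] at this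
      have h2 : p.2 = p'.2 := funext fun b => by
        have := congrFun hpp (q1 (Sum.inr b)); rwa [hΦr, hΦr] at this
      exact Prod.ext h1 h2
    · intro x
      refine ⟨(fun a => x (q1 (Sum.inl a)), fun b => x (q1 (Sum.inr b))), ?_⟩
      funext i
      show Sum.elim _ _ (q1.symm i) = x i
      conv_rhs => rw [← q1.apply_symm_apply i]
      rcases q1.symm i with a | b <;> simp
  have hprodSplit : ∀ g : Fin (2*h+1) → ℝ,
      ∏ i, g i = (∏ a : Fin (h+1), g (q1 (Sum.inl a))) * ∏ b : Fin h, g (q1 (Sum.inr b)) := by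
    intro g
    rw [← Equiv.prod_comp q1 g, Fintype.prod_sum_type]
  have hsumSplit : ∀ g : Fin (2*h+1) → ℕ,
      ∑ i, g i = (∑ a : Fin (h+1), g (q1 (Sum.inl a))) + ∑ b : Fin h, g (q1 (Sum.inr b)) := by
    intro g
    rw [← Equiv.sum_comp q1 g, Fintype.sum_sum_type]
  have hcoeL : ∀ a : Fin (h+1), ((q1 (Sum.inl a)) : ℕ) = (a:ℕ) := by intro a; simp [hq1]
  have hcoeR : ∀ b : Fin h, ((q1 (Sum.inr b)) : ℕ) = h+1+(b:ℕ) := by intro b; simp [hq1]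
  have heL : ∀ a : Fin (h+1), eVec (2*h+1) (q1 (Sum.inl a)) = true := by
    intro a
    simp only [eVec, hcoeL, decide_eq_true_eq]
    have := a.isLt; omega
  have heR : ∀ b : Fin h, eVec (2*h+1) (q1 (Sum.inr b)) = false := by
    intro b
    simp only [eVec, hcoeR]
    rw [decide_eq_false_iff_not]
    omega
  -- transport sum
  rw [← Fintype.sum_bijective Φ hΦbij
    (fun p => (∏ i, if xor (Φ p i) (eVec (2*h+1) i) then q else 1 - q) * maj (2*h+1) (Φ p))
    _ (fun p => rfl)]
  rw [Fintype.sum_prod_type]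
  -- compute the summand for p = (u,v)
  have hsummand : ∀ (u : Fin (h+1) → Bool) (v : Fin h → Bool),
      (∏ i, if xor (Φ (u,v) i) (eVec (2*h+1) i) then q else 1 - q) * maj (2*h+1) (Φ (u,v))
      = (∏ a, if u a then (1-q) else 1-(1-q)) *
        ((∏ b, if v b then q else 1-q) * (if 2*h+1 ≤ 2*(cnt u + cnt v) then (1:ℝ) else -1)) := by
    intro u v
    have hc : cnt (Φ (u,v)) = cnt u + cnt v := by
      unfold cnt
      rw [hsumSplit (fun i => if Φ (u,v) i then 1 else 0)]
      congr 1
      · exact Finset.sum_congr rfl fun a _ => by rw [hΦl]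
      · exact Finset.sum_congr rfl fun b _ => by rw [hΦr]
    have hm : maj (2*h+1) (Φ (u,v)) = if 2*h+1 ≤ 2*(cnt u + cnt v) then (1:ℝ) else -1 := by
      rw [majEq hodd, hc]
    have hw : (∏ i, if xor (Φ (u,v) i) (eVec (2*h+1) i) then q else 1 - q)
        = (∏ a, if u a then (1-q) else 1-(1-q)) * (∏ b, if v b then q else 1-q) := by
      rw [hprodSplit (fun i => if xor (Φ (u,v) i) (eVec (2*h+1) i) then q else 1 - q)]
      congr 1
      · refine Finset.prod_congr rfl fun a _ => ?_
        rw [hΦl, heL]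
        cases hu : u a <;> simp [hu] <;> ring
      · refine Finset.prod_congr rfl fun b _ => ?_
        rw [hΦr, heR]
        cases hv : v b <;> simp [hv] <;> ring
    rw [hm, hw]
    ring
  rw [Finset.sum_congr rfl fun u _ => Finset.sum_congr rfl fun v _ => hsummand u v]
  -- inner cubeSum over v
  have hinner : ∀ s : ℕ,
      ∑ v : Fin h → Bool, (∏ b, if v b then q else 1-q) * (if 2*h+1 ≤ 2*(s + cnt v) then (1:ℝ) else -1)
      = ∑ t ∈ range (h+1), binomPMF h q t * (if 2*h+1 ≤ 2*(s+t) then (1:ℝ) else -1) :=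
    fun s => cubeSum h q (fun t => if 2*h+1 ≤ 2*(s+t) then (1:ℝ) else -1)
  have step1 : ∀ u : Fin (h+1) → Bool,
      ∑ v : Fin h → Bool, (∏ a, if u a then (1-q) else 1-(1-q)) *
        ((∏ b, if v b then q else 1-q) * (if 2*h+1 ≤ 2*(cnt u + cnt v) then (1:ℝ) else -1))
      = (∏ a, if u a then (1-q) else 1-(1-q)) *
          (∑ t ∈ range (h+1), binomPMF h q t * (if 2*h+1 ≤ 2*(cnt u + t) then (1:ℝ) else -1)) := by
    intro u
    rw [← Finset.mul_sum, hinner (cnt u)]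
  rw [Finset.sum_congr rfl fun u _ => step1 u]
  -- outer cubeSum over u
  have houter : ∑ u : Fin (h+1) → Bool, (∏ a, if u a then (1-q) else 1-(1-q)) *
      (∑ t ∈ range (h+1), binomPMF h q t * (if 2*h+1 ≤ 2*(cnt u + t) then (1:ℝ) else -1))
      = ∑ s ∈ range (h+2), binomPMF (h+1) (1-q) s *
          (∑ t ∈ range (h+1), binomPMF h q t * (if 2*h+1 ≤ 2*(s + t) then (1:ℝ) else -1)) :=
    cubeSum (h+1) (1-q) (fun s => ∑ t ∈ range (h+1), binomPMF h q t *
      (if 2*h+1 ≤ 2*(s + t) then (1:ℝ) else -1))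
  rw [houter]
  -- reflect
  have hrefl : ∑ s ∈ range (h+2), binomPMF (h+1) (1-q) s *
      (∑ t ∈ range (h+1), binomPMF h q t * (if 2*h+1 ≤ 2*(s + t) then (1:ℝ) else -1))
      = ∑ a ∈ range (h+2), binomPMF (h+1) (1-q) (h+1-a) *
          (∑ t ∈ range (h+1), binomPMF h q t * (if 2*h+1 ≤ 2*((h+1-a) + t) then (1:ℝ) else -1)) := by
    rw [← Finset.sum_range_reflect]
    exact Finset.sum_congr rfl fun j hj => by rw [show h+2-1-j = h+1-j by omega]
  rw [hrefl]
  rw [← binomAlg h q]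
  refine Finset.sum_congr rfl fun a ha => ?_
  have ha' : a ≤ h+1 := by have := Finset.mem_range.mp ha; omega
  rw [pmfSymm (h+1) q a ha']
  congr 1
  refine Finset.sum_congr rfl fun t _ => ?_
  have hiff : (2*h+1 ≤ 2*((h+1-a) + t)) ↔ a ≤ t := by omega
  simp only [hiff]
lemma stabEq (n : ℕ) (q : ℝ) (f : (Fin n → Bool) → ℝ) :
    stab n (1-2*q) f = (1/2^n) * ∑ x : Fin n → Bool, ∑ y : Fin n → Bool,
      (∏ i, if xor (x i) (y i) then q else 1-q) * (f x * f y) := by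
  unfold stab
  congr 1
  refine Finset.sum_congr rfl fun x _ => ?_
  refine Fintype.sum_bijective (fun z : Fin n → Bool => fun i => xor (x i) (z i)) ?_ _ _ ?_
  · apply Function.Involutive.bijective
    intro z; funext i; cases hx : x i <;> cases hz : z i <;> simp [hx, hz]
  · intro z
    show (∏ i, if z i then (1-(1-2*q))/2 else (1+(1-2*q))/2) * (f x * f (fun i => xor (x i) (z i)))
       = (∏ i, if xor (x i) (xor (x i) (z i)) then q else 1-q) * (f x * f (fun i => xor (x i) (z i)))
    congr 1
    refine Finset.prod_congr rfl fun i _ => ?_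
    cases hx : x i <;> cases hz : z i <;> simp [hx, hz] <;> ring

noncomputable def indE (n : ℕ) (x : Fin n → Bool) : ℝ :=
  if x = eVec n ∨ x = (fun i => !(eVec n i)) then 1 else 0

lemma eNeBar (n : ℕ) (hn : 0 < n) : eVec n ≠ (fun i => !(eVec n i)) := by
  intro hcon
  have h1 := congrFun hcon ⟨0, hn⟩
  have h0 : eVec n ⟨0, hn⟩ = true := by simp [eVec]
  rw [h0] at h1
  exact absurd h1.symm (by simp)

lemma sumInd (n : ℕ) (hn : 0 < n) (F : (Fin n → Bool) → ℝ) :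
    ∑ y : Fin n → Bool, indE n y * F y = F (eVec n) + F (fun i => !(eVec n i)) := by
  have hne := eNeBar n hn
  have hsplit : ∀ y : Fin n → Bool, indE n y * F y =
      (if y = eVec n then F y else 0) + (if y = (fun i => !(eVec n i)) then F y else 0) := by
    intro y
    unfold indE
    by_cases h1 : y = eVec n
    · rw [if_pos (Or.inl h1), if_pos h1, if_neg (by rw [h1]; exact hne)]; ring
    · by_cases h2 : y = (fun i => !(eVec n i))
      · rw [if_pos (Or.inr h2), if_neg h1, if_pos h2]; ring
      · rw [if_neg (by tauto), if_neg h1, if_neg h2]; ring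
  rw [Finset.sum_congr rfl fun y _ => hsplit y, Finset.sum_add_distrib,
    Finset.sum_ite_eq' univ (eVec n) F, Finset.sum_ite_eq' univ (fun i => !(eVec n i)) F,
    if_pos (mem_univ _), if_pos (mem_univ _)]

lemma prodDiff (n : ℕ) (x y : Fin n → Bool) :
    maj n x * maj n y - gfun n x * gfun n y
    = (2*indE n y + 2*indE n x - 4*(indE n x)*(indE n y)) * (maj n x * maj n y) := by
  unfold gfun indE
  split_ifs <;> ring

lemma sumNeg (n : ℕ) (hodd : Odd n) (q : ℝ) :
    ∑ x : Fin n → Bool, (∏ i, if xor (x i) (!(eVec n i)) then q else 1-q) * maj n x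
    = - ∑ x : Fin n → Bool, (∏ i, if xor (x i) (eVec n i) then q else 1-q) * maj n x := by
  rw [← Finset.sum_neg_distrib]
  refine Fintype.sum_bijective (fun x : Fin n → Bool => fun i => !(x i)) ?_ _ _ ?_
  · apply Function.Involutive.bijective
    intro x; funext i; simp
  · intro x
    show (∏ i, if xor (x i) (!(eVec n i)) then q else 1-q) * maj n x
       = -((∏ i, if xor (!(x i)) (eVec n i) then q else 1-q) * maj n (fun i => !(x i)))
    rw [majNot hodd]
    have hW : (∏ i, if xor (!(x i)) (eVec n i) then q else 1-q)
        = ∏ i, if xor (x i) (!(eVec n i)) then q else 1-q :=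
      Finset.prod_congr rfl fun i _ => by cases hx : x i <;> cases he : eVec n i <;> simp [hx, he]
    rw [hW]; ring

lemma Wcomm (n : ℕ) (q : ℝ) (x y : Fin n → Bool) :
    (∏ i, if xor (x i) (y i) then q else 1-q) = ∏ i, if xor (y i) (x i) then q else 1-q :=
  Finset.prod_congr rfl fun i _ => by cases hx : x i <;> cases hy : y i <;> simp [hx, hy]

lemma Wself (n : ℕ) (q : ℝ) (c : Fin n → Bool) :
    (∏ i, if xor (c i) (c i) then q else 1-q) = (1-q)^n := by
  have hpt : ∀ i : Fin n, (if xor (c i) (c i) then q else 1-q) = 1-q := fun i => by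
    cases hc : c i <;> simp [hc]
  rw [Finset.prod_congr rfl fun i _ => hpt i]
  simp

lemma Wopp (n : ℕ) (q : ℝ) (c : Fin n → Bool) :
    (∏ i, if xor (c i) (!(c i)) then q else 1-q) = q^n := by
  have hpt : ∀ i : Fin n, (if xor (c i) (!(c i)) then q else 1-q) = q := fun i => by
    cases hc : c i <;> simp [hc]
  rw [Finset.prod_congr rfl fun i _ => hpt i]
  simp
lemma bigDiff (h : ℕ) (q : ℝ) :
    stab (2*h+1) (1-2*q) (maj (2*h+1)) - stab (2*h+1) (1-2*q) (gfun (2*h+1))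
    = (8 / 2^(2*h+1)) * ((∑ x : Fin (2*h+1) → Bool,
        (∏ i, if xor (x i) (eVec (2*h+1) i) then q else 1-q) * maj (2*h+1) x)
        + q^(2*h+1) - (1-q)^(2*h+1)) := by
  have hodd : Odd (2*h+1) := ⟨h, by ring⟩
  have hpos : 0 < 2*h+1 := by omega
  have hIx : ∀ x : Fin (2*h+1) → Bool,
      ∑ y : Fin (2*h+1) → Bool, indE (2*h+1) y *
        ((∏ i, if xor (x i) (y i) then q else 1-q) * (maj (2*h+1) x * maj (2*h+1) y))
      = (∏ i, if xor (x i) (eVec (2*h+1) i) then q else 1-q) * maj (2*h+1) x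
        - (∏ i, if xor (x i) (!(eVec (2*h+1) i)) then q else 1-q) * maj (2*h+1) x := by
    intro x
    have hs : ∑ y : Fin (2*h+1) → Bool, indE (2*h+1) y *
        ((∏ i, if xor (x i) (y i) then q else 1-q) * (maj (2*h+1) x * maj (2*h+1) y))
        = (∏ i, if xor (x i) (eVec (2*h+1) i) then q else 1-q) *
            (maj (2*h+1) x * maj (2*h+1) (eVec (2*h+1)))
          + (∏ i, if xor (x i) (!(eVec (2*h+1) i)) then q else 1-q) *
            (maj (2*h+1) x * maj (2*h+1) (fun i => !(eVec (2*h+1) i))) :=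
      sumInd (2*h+1) hpos
        (fun y => (∏ i, if xor (x i) (y i) then q else 1-q) * (maj (2*h+1) x * maj (2*h+1) y))
    rw [hs, majE h, majEbar h]
    ring
  have hT1 : ∑ x : Fin (2*h+1) → Bool, ∑ y : Fin (2*h+1) → Bool, indE (2*h+1) y *
        ((∏ i, if xor (x i) (y i) then q else 1-q) * (maj (2*h+1) x * maj (2*h+1) y))
      = 2 * ∑ x : Fin (2*h+1) → Bool,
          (∏ i, if xor (x i) (eVec (2*h+1) i) then q else 1-q) * maj (2*h+1) x := by
    rw [Finset.sum_congr rfl fun x _ => hIx x, Finset.sum_sub_distrib, sumNeg (2*h+1) hodd q]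
    ring
  have hGe : (∑ y : Fin (2*h+1) → Bool, (∏ i, if xor (eVec (2*h+1) i) (y i) then q else 1-q) *
        (maj (2*h+1) (eVec (2*h+1)) * maj (2*h+1) y))
      = ∑ x : Fin (2*h+1) → Bool,
          (∏ i, if xor (x i) (eVec (2*h+1) i) then q else 1-q) * maj (2*h+1) x := by
    refine Finset.sum_congr rfl fun y _ => ?_
    rw [majE h, Wcomm]
    ring
  have hGebar : (∑ y : Fin (2*h+1) → Bool, (∏ i, if xor (!(eVec (2*h+1) i)) (y i) then q else 1-q) *
        (maj (2*h+1) (fun i => !(eVec (2*h+1) i)) * maj (2*h+1) y))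
      = ∑ x : Fin (2*h+1) → Bool,
          (∏ i, if xor (x i) (eVec (2*h+1) i) then q else 1-q) * maj (2*h+1) x := by
    have hpt : ∀ y : Fin (2*h+1) → Bool,
        (∏ i, if xor (!(eVec (2*h+1) i)) (y i) then q else 1-q) *
          (maj (2*h+1) (fun i => !(eVec (2*h+1) i)) * maj (2*h+1) y)
        = -((∏ i, if xor (y i) (!(eVec (2*h+1) i)) then q else 1-q) * maj (2*h+1) y) := by
      intro y; rw [majEbar h, Wcomm]; ring
    rw [Finset.sum_congr rfl fun y _ => hpt y]
    rw [Finset.sum_neg_distrib, sumNeg (2*h+1) hodd q, neg_neg]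
  have hT2 : ∑ x : Fin (2*h+1) → Bool, indE (2*h+1) x *
        (∑ y : Fin (2*h+1) → Bool,
          (∏ i, if xor (x i) (y i) then q else 1-q) * (maj (2*h+1) x * maj (2*h+1) y))
      = 2 * ∑ x : Fin (2*h+1) → Bool,
          (∏ i, if xor (x i) (eVec (2*h+1) i) then q else 1-q) * maj (2*h+1) x := by
    have hs : ∑ x : Fin (2*h+1) → Bool, indE (2*h+1) x *
        (∑ y : Fin (2*h+1) → Bool,
          (∏ i, if xor (x i) (y i) then q else 1-q) * (maj (2*h+1) x * maj (2*h+1) y))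
        = (∑ y : Fin (2*h+1) → Bool, (∏ i, if xor (eVec (2*h+1) i) (y i) then q else 1-q) *
            (maj (2*h+1) (eVec (2*h+1)) * maj (2*h+1) y))
          + (∑ y : Fin (2*h+1) → Bool, (∏ i, if xor (!(eVec (2*h+1) i)) (y i) then q else 1-q) *
            (maj (2*h+1) (fun i => !(eVec (2*h+1) i)) * maj (2*h+1) y)) :=
      sumInd (2*h+1) hpos
        (fun x => ∑ y : Fin (2*h+1) → Bool,
          (∏ i, if xor (x i) (y i) then q else 1-q) * (maj (2*h+1) x * maj (2*h+1) y))
    rw [hs, hGe, hGebar]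
    ring
  have hT3 : ∑ x : Fin (2*h+1) → Bool, indE (2*h+1) x *
        (∑ y : Fin (2*h+1) → Bool, indE (2*h+1) y *
          ((∏ i, if xor (x i) (y i) then q else 1-q) * (maj (2*h+1) x * maj (2*h+1) y)))
      = 2*(1-q)^(2*h+1) - 2*q^(2*h+1) := by
    have hs : ∑ x : Fin (2*h+1) → Bool, indE (2*h+1) x *
        (∑ y : Fin (2*h+1) → Bool, indE (2*h+1) y *
          ((∏ i, if xor (x i) (y i) then q else 1-q) * (maj (2*h+1) x * maj (2*h+1) y)))
        = (∑ y : Fin (2*h+1) → Bool, indE (2*h+1) y *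
            ((∏ i, if xor (eVec (2*h+1) i) (y i) then q else 1-q) *
              (maj (2*h+1) (eVec (2*h+1)) * maj (2*h+1) y)))
          + (∑ y : Fin (2*h+1) → Bool, indE (2*h+1) y *
            ((∏ i, if xor (!(eVec (2*h+1) i)) (y i) then q else 1-q) *
              (maj (2*h+1) (fun i => !(eVec (2*h+1) i)) * maj (2*h+1) y))) :=
      sumInd (2*h+1) hpos
        (fun x => ∑ y : Fin (2*h+1) → Bool, indE (2*h+1) y *
          ((∏ i, if xor (x i) (y i) then q else 1-q) * (maj (2*h+1) x * maj (2*h+1) y)))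
    have hIe : ∑ y : Fin (2*h+1) → Bool, indE (2*h+1) y *
        ((∏ i, if xor (eVec (2*h+1) i) (y i) then q else 1-q) *
          (maj (2*h+1) (eVec (2*h+1)) * maj (2*h+1) y))
        = (∏ i, if xor (eVec (2*h+1) i) (eVec (2*h+1) i) then q else 1-q) * maj (2*h+1) (eVec (2*h+1))
          - (∏ i, if xor (eVec (2*h+1) i) (!(eVec (2*h+1) i)) then q else 1-q) *
              maj (2*h+1) (eVec (2*h+1)) := hIx (eVec (2*h+1))
    have hIebar : ∑ y : Fin (2*h+1) → Bool, indE (2*h+1) y *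
        ((∏ i, if xor (!(eVec (2*h+1) i)) (y i) then q else 1-q) *
          (maj (2*h+1) (fun i => !(eVec (2*h+1) i)) * maj (2*h+1) y))
        = (∏ i, if xor (!(eVec (2*h+1) i)) (eVec (2*h+1) i) then q else 1-q) *
            maj (2*h+1) (fun i => !(eVec (2*h+1) i))
          - (∏ i, if xor (!(eVec (2*h+1) i)) (!(eVec (2*h+1) i)) then q else 1-q) *
              maj (2*h+1) (fun i => !(eVec (2*h+1) i)) := hIx (fun i => !(eVec (2*h+1) i))
    have c1 : (∏ i, if xor (eVec (2*h+1) i) (eVec (2*h+1) i) then q else 1-q) = (1-q)^(2*h+1) :=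
      Wself (2*h+1) q (eVec (2*h+1))
    have c2 : (∏ i, if xor (eVec (2*h+1) i) (!(eVec (2*h+1) i)) then q else 1-q) = q^(2*h+1) :=
      Wopp (2*h+1) q (eVec (2*h+1))
    have c3 : (∏ i, if xor (!(eVec (2*h+1) i)) (eVec (2*h+1) i) then q else 1-q) = q^(2*h+1) := by
      rw [← Wopp (2*h+1) q (eVec (2*h+1))]
      exact Finset.prod_congr rfl fun i _ => by cases he : eVec (2*h+1) i <;> simp [he]
    have c4 : (∏ i, if xor (!(eVec (2*h+1) i)) (!(eVec (2*h+1) i)) then q else 1-q)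
        = (1-q)^(2*h+1) := by
      rw [← Wself (2*h+1) q (eVec (2*h+1))]
      exact Finset.prod_congr rfl fun i _ => by cases he : eVec (2*h+1) i <;> simp [he]
    rw [hs, hIe, hIebar, majE h, majEbar h, c1, c2, c3, c4]
    ring
  have hper : ∀ x : Fin (2*h+1) → Bool,
      ∑ y : Fin (2*h+1) → Bool,
        ((∏ i, if xor (x i) (y i) then q else 1-q) * (maj (2*h+1) x * maj (2*h+1) y)
          - (∏ i, if xor (x i) (y i) then q else 1-q) * (gfun (2*h+1) x * gfun (2*h+1) y))
      = 2 * (∑ y : Fin (2*h+1) → Bool, indE (2*h+1) y *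
            ((∏ i, if xor (x i) (y i) then q else 1-q) * (maj (2*h+1) x * maj (2*h+1) y)))
        + 2 * (indE (2*h+1) x * (∑ y : Fin (2*h+1) → Bool,
            (∏ i, if xor (x i) (y i) then q else 1-q) * (maj (2*h+1) x * maj (2*h+1) y)))
        - 4 * (indE (2*h+1) x * (∑ y : Fin (2*h+1) → Bool, indE (2*h+1) y *
            ((∏ i, if xor (x i) (y i) then q else 1-q) * (maj (2*h+1) x * maj (2*h+1) y)))) := by
    intro x
    have hpt : ∀ y : Fin (2*h+1) → Bool,
        (∏ i, if xor (x i) (y i) then q else 1-q) * (maj (2*h+1) x * maj (2*h+1) y)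
          - (∏ i, if xor (x i) (y i) then q else 1-q) * (gfun (2*h+1) x * gfun (2*h+1) y)
        = 2 * (indE (2*h+1) y *
            ((∏ i, if xor (x i) (y i) then q else 1-q) * (maj (2*h+1) x * maj (2*h+1) y)))
          + 2 * (indE (2*h+1) x *
            ((∏ i, if xor (x i) (y i) then q else 1-q) * (maj (2*h+1) x * maj (2*h+1) y)))
          - 4 * (indE (2*h+1) x * (indE (2*h+1) y *
            ((∏ i, if xor (x i) (y i) then q else 1-q) * (maj (2*h+1) x * maj (2*h+1) y)))) := by
      intro y
      calc (∏ i, if xor (x i) (y i) then q else 1-q) * (maj (2*h+1) x * maj (2*h+1) y)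
          - (∏ i, if xor (x i) (y i) then q else 1-q) * (gfun (2*h+1) x * gfun (2*h+1) y)
          = (∏ i, if xor (x i) (y i) then q else 1-q) *
              (maj (2*h+1) x * maj (2*h+1) y - gfun (2*h+1) x * gfun (2*h+1) y) := by ring
        _ = (∏ i, if xor (x i) (y i) then q else 1-q) *
              ((2*indE (2*h+1) y + 2*indE (2*h+1) x - 4*(indE (2*h+1) x)*(indE (2*h+1) y)) *
                (maj (2*h+1) x * maj (2*h+1) y)) := by rw [prodDiff]
        _ = _ := by ring
    rw [Finset.sum_congr rfl fun y _ => hpt y]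
    rw [Finset.sum_sub_distrib, Finset.sum_add_distrib]
    rw [← Finset.mul_sum, ← Finset.mul_sum, ← Finset.mul_sum, ← Finset.mul_sum, ← Finset.mul_sum]
  rw [stabEq, stabEq, ← mul_sub]
  have hcomb : (∑ x : Fin (2*h+1) → Bool, ∑ y : Fin (2*h+1) → Bool,
        (∏ i, if xor (x i) (y i) then q else 1-q) * (maj (2*h+1) x * maj (2*h+1) y))
      - (∑ x : Fin (2*h+1) → Bool, ∑ y : Fin (2*h+1) → Bool,
        (∏ i, if xor (x i) (y i) then q else 1-q) * (gfun (2*h+1) x * gfun (2*h+1) y))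
      = 8 * ((∑ x : Fin (2*h+1) → Bool,
          (∏ i, if xor (x i) (eVec (2*h+1) i) then q else 1-q) * maj (2*h+1) x)
          + q^(2*h+1) - (1-q)^(2*h+1)) := by
    rw [← Finset.sum_sub_distrib]
    have hperx : ∀ x : Fin (2*h+1) → Bool,
        (∑ y : Fin (2*h+1) → Bool,
          (∏ i, if xor (x i) (y i) then q else 1-q) * (maj (2*h+1) x * maj (2*h+1) y))
        - (∑ y : Fin (2*h+1) → Bool,
          (∏ i, if xor (x i) (y i) then q else 1-q) * (gfun (2*h+1) x * gfun (2*h+1) y))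
        = 2 * (∑ y : Fin (2*h+1) → Bool, indE (2*h+1) y *
              ((∏ i, if xor (x i) (y i) then q else 1-q) * (maj (2*h+1) x * maj (2*h+1) y)))
          + 2 * (indE (2*h+1) x * (∑ y : Fin (2*h+1) → Bool,
              (∏ i, if xor (x i) (y i) then q else 1-q) * (maj (2*h+1) x * maj (2*h+1) y)))
          - 4 * (indE (2*h+1) x * (∑ y : Fin (2*h+1) → Bool, indE (2*h+1) y *
              ((∏ i, if xor (x i) (y i) then q else 1-q) * (maj (2*h+1) x * maj (2*h+1) y)))) := by
      intro x
      rw [← Finset.sum_sub_distrib]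
      exact hper x
    rw [Finset.sum_congr rfl fun x _ => hperx x]
    rw [Finset.sum_sub_distrib, Finset.sum_add_distrib]
    rw [← Finset.mul_sum, ← Finset.mul_sum, ← Finset.mul_sum]
    rw [hT1, hT2, hT3]
    ring
  rw [hcomb]
  ring
theorem stmt3 (n : ℕ) (hodd : Odd n) (hn : 3 ≤ n) (q : ℝ) (hq0 : 0 < q) (hq1 : q < 1) :
    (2 : ℝ) ^ (n - 3) * (stab n (1 - 2 * q) (maj n) - stab n (1 - 2 * q) (gfun n))
      = (1 - 2 * q) * binomCollision ((n - 1) / 2) q + q ^ n - (1 - q) ^ n := by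
  obtain ⟨h, hh⟩ := hodd
  have hn2 : n = 2*h+1 := by omega
  subst hn2
  obtain ⟨k, rfl⟩ : ∃ k, h = k+1 := ⟨h-1, by omega⟩
  have hidx : (2*(k+1)+1-1)/2 = k+1 := by omega
  have h3 : 2*(k+1)+1-3 = 2*k := by omega
  rw [bigDiff (k+1) q, Vval (k+1) q, hidx, h3]
  have hpow : (2:ℝ)^(2*(k+1)+1) = 2^(2*k) * 8 := by
    rw [show 2*(k+1)+1 = 2*k+3 by ring, pow_add]
    norm_num
  rw [hpow]
  have hne : (2:ℝ)^(2*k) ≠ 0 := by positivity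
  field_simp
end
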